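/- arXiv:2502.07861 — 7 statements merged into one kernel-verified Lean document; each statement's English description precedes it below -/
import Mathlib

section
/- Let n, d be positive integers, let s_1, …, s_n be strictly positive reals, let v_1, …, v_n ∈ ℝ^d, and set Z = ∑_{i=1}^n s_i, N = ∑_{i=1}^n s_i v_i, F = (∑_{i=1}^n ‖v_i‖₂²)^{1/2}, and ‖s‖₂ = (∑_{i=1}^n s_i²)^{1/2}. Let ε ∈ (0,1), and suppose Ẑ ∈ ℝ and N̂ ∈ ℝ^d satisfy |Ẑ − Z| ≤ ε·Z and ‖N̂ − N‖₂ ≤ ε·‖s‖₂·F. Then ‖ N̂/Ẑ − N/Z ‖₂ ≤ (2ε/(1−ε)) · (‖s‖₂/Z) · F. -/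
/-- Combining an `ε`-accurate numerator estimate and an `ε`-accurate softmax-normalization
estimate gives a `2ε/(1-ε)`-accurate attention estimate (final step of Theorem 3.1):
if `|Ẑ − Z| ≤ ε Z` and `‖N̂ − N‖ ≤ ε ‖s‖₂ F` with `Z = ∑ s_i`, `N = ∑ s_i v_i`,
`F = (∑ ‖v_i‖²)^{1/2}`, `‖s‖₂ = (∑ s_i²)^{1/2}`, then
`‖N̂/Ẑ − N/Z‖ ≤ (2ε/(1−ε)) (‖s‖₂/Z) F`. -/
theorem stmt_4 (n d : ℕ) (hn : 0 < n) (hd : 0 < d)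
    (s : Fin n → ℝ) (hs : ∀ i, 0 < s i)
    (v : Fin n → EuclideanSpace ℝ (Fin d))
    (ε : ℝ) (hε : 0 < ε) (hε1 : ε < 1)
    (Zhat : ℝ) (Nhat : EuclideanSpace ℝ (Fin d))
    (hZ : |Zhat - ∑ i : Fin n, s i| ≤ ε * ∑ i : Fin n, s i)
    (hN : ‖Nhat - ∑ i : Fin n, s i • v i‖
        ≤ ε * Real.sqrt (∑ i : Fin n, (s i) ^ 2) * Real.sqrt (∑ i : Fin n, ‖v i‖ ^ 2)) :
    ‖Zhat⁻¹ • Nhat - (∑ i : Fin n, s i)⁻¹ • ∑ i : Fin n, s i • v i‖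
      ≤ (2 * ε / (1 - ε)) * (Real.sqrt (∑ i : Fin n, (s i) ^ 2) / ∑ i : Fin n, s i)
          * Real.sqrt (∑ i : Fin n, ‖v i‖ ^ 2) := by
  set Z : ℝ := ∑ i : Fin n, s i with hZdef
  set N : EuclideanSpace ℝ (Fin d) := ∑ i : Fin n, s i • v i with hNdef
  set S : ℝ := Real.sqrt (∑ i : Fin n, (s i) ^ 2) with hSdef
  set F : ℝ := Real.sqrt (∑ i : Fin n, ‖v i‖ ^ 2) with hFdef
  have hS0 : 0 ≤ S := Real.sqrt_nonneg _
  have hF0 : 0 ≤ F := Real.sqrt_nonneg _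
  have hZpos : 0 < Z := Finset.sum_pos (fun i _ => hs i) (by simp [Finset.univ_nonempty_iff, Fin.pos_iff_nonempty.mp hn])
  have h1ε : 0 < 1 - ε := by linarith
  have hZhat_lb : (1 - ε) * Z ≤ Zhat := by
    have := abs_le.mp hZ
    nlinarith [this.1]
  have hZhatpos : 0 < Zhat := lt_of_lt_of_le (by positivity) hZhat_lb
  -- Cauchy–Schwarz: ‖N‖ ≤ S * F
  have hNle : ‖N‖ ≤ S * F := by
    calc ‖N‖ ≤ ∑ i : Fin n, ‖s i • v i‖ := norm_sum_le _ _
      _ = ∑ i : Fin n, s i * ‖v i‖ := by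
          refine Finset.sum_congr rfl fun i _ => ?_
          rw [norm_smul, Real.norm_eq_abs, abs_of_pos (hs i)]
      _ ≤ S * F := Real.sum_mul_le_sqrt_mul_sqrt _ _ _
  -- decomposition
  have hdecomp : Zhat⁻¹ • Nhat - Z⁻¹ • N
      = Zhat⁻¹ • (Nhat - N) + (Zhat⁻¹ - Z⁻¹) • N := by
    rw [smul_sub, sub_smul]
    abel
  have hinvZhat : Zhat⁻¹ ≤ ((1 - ε) * Z)⁻¹ :=
    inv_anti₀ (by positivity) hZhat_lb
  have hinvdiff : |Zhat⁻¹ - Z⁻¹| ≤ ε / ((1 - ε) * Z) := by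
    have : Zhat⁻¹ - Z⁻¹ = (Z - Zhat) / (Zhat * Z) := by
      field_simp
    rw [this, abs_div, abs_of_pos (by positivity : (0:ℝ) < Zhat * Z)]
    rw [div_le_div_iff₀ (by positivity) (by positivity)]
    have h1 : |Z - Zhat| ≤ ε * Z := by rw [abs_sub_comm]; exact hZ
    nlinarith [abs_nonneg (Z - Zhat), mul_le_mul_of_nonneg_left hZhat_lb (le_of_lt hZpos)]
  have h1 : ‖Zhat⁻¹ • (Nhat - N)‖ ≤ ((1 - ε) * Z)⁻¹ * (ε * S * F) := by
    rw [norm_smul, Real.norm_eq_abs, abs_of_pos (by positivity)]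
    exact mul_le_mul hinvZhat hN (norm_nonneg _) (by positivity)
  have h2 : ‖(Zhat⁻¹ - Z⁻¹) • N‖ ≤ (ε / ((1 - ε) * Z)) * (S * F) := by
    rw [norm_smul, Real.norm_eq_abs]
    exact mul_le_mul hinvdiff hNle (norm_nonneg _) (by positivity)
  calc ‖Zhat⁻¹ • Nhat - Z⁻¹ • N‖
      ≤ ‖Zhat⁻¹ • (Nhat - N)‖ + ‖(Zhat⁻¹ - Z⁻¹) • N‖ := by
        rw [hdecomp]; exact norm_add_le _ _
    _ ≤ ((1 - ε) * Z)⁻¹ * (ε * S * F) + (ε / ((1 - ε) * Z)) * (S * F) := add_le_add h1 h2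
    _ = (2 * ε / (1 - ε)) * (S / Z) * F := by field_simp; ring
end

section
/- Let E be a real normed vector space, let ι be an index type, let f : ι → E, let T be a nonnegative integer, and let S_0 ⊇ S_1 ⊇ ⋯ ⊇ S_T be a decreasing chain of finite subsets of ι. Then ‖ 2^T · ∑_{i ∈ S_T} f(i) − ∑_{i ∈ S_0} f(i) ‖ ≤ ∑_{l=0}^{T−1} 2^l · ‖ ∑_{i ∈ S_{l+1}} f(i) − ∑_{i ∈ S_l ∖ S_{l+1}} f(i) ‖. -/
/-- Telescoping error-accumulation inequality of MergeAndReduce: for a decreasing chain of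
finite index sets `S 0 ⊇ S 1 ⊇ ⋯ ⊇ S T` and any `f : ι → E`,
`‖2^T ∑_{i ∈ S T} f i − ∑_{i ∈ S 0} f i‖ ≤
  ∑_{l=0}^{T−1} 2^l ‖∑_{i ∈ S (l+1)} f i − ∑_{i ∈ S l \ S (l+1)} f i‖`. -/
theorem stmt_5 {E : Type*} [NormedAddCommGroup E] [NormedSpace ℝ E]
    {ι : Type*} [DecidableEq ι] (f : ι → E) (T : ℕ) (S : ℕ → Finset ι)
    (hS : ∀ l, l < T → S (l + 1) ⊆ S l) :
    ‖(2 : ℝ) ^ T • (∑ i ∈ S T, f i) - ∑ i ∈ S 0, f i‖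
      ≤ ∑ l ∈ Finset.range T,
          (2 : ℝ) ^ l * ‖(∑ i ∈ S (l + 1), f i) - ∑ i ∈ S l \ S (l + 1), f i‖ := by
  induction T with
  | zero => simp
  | succ T ih =>
    have hsub : S (T + 1) ⊆ S T := hS T (by omega)
    have ih' := ih (fun l hl => hS l (by omega))
    have hd : ∑ i ∈ S T \ S (T + 1), f i
        = (∑ i ∈ S T, f i) - ∑ i ∈ S (T + 1), f i := by
      rw [eq_sub_iff_add_eq, Finset.sum_sdiff hsub]
    have key : (2 : ℝ) ^ (T + 1) • (∑ i ∈ S (T + 1), f i) - ∑ i ∈ S 0, f i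
        = ((2 : ℝ) ^ T • (∑ i ∈ S T, f i) - ∑ i ∈ S 0, f i)
          + (2 : ℝ) ^ T • ((∑ i ∈ S (T + 1), f i) - ∑ i ∈ S T \ S (T + 1), f i) := by
      rw [hd, pow_succ]; module
    rw [Finset.sum_range_succ, key]
    refine le_trans (norm_add_le _ _) (add_le_add ih' (le_of_eq ?_))
    rw [norm_smul, Real.norm_eq_abs, abs_of_nonneg (by positivity)]
end

section
/- Let d be a positive integer and r > 0 with r² ≤ d, and let x and y be independent random vectors, each uniformly distributed on the discrete hypercube {−r/√d, r/√d}^d ⊂ ℝ^d. Then the variance of the random variable exp(⟨x, y⟩/√d) is at most exp(4). -/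
/-- The vertex of the hypercube `{−r/√d, r/√d}^d` encoded by a sign pattern `ε`. -/
noncomputable def hcVec (d : ℕ) (r : ℝ) (ε : Fin d → Bool) : Fin d → ℝ :=
  fun i => if ε i then r / Real.sqrt d else -(r / Real.sqrt d)

/-- The expectation of `g x y` when `x, y` are independent and uniform on the hypercube
`{−r/√d, r/√d}^d`, encoded as the average over all pairs of sign patterns. -/
noncomputable def hcAvg (d : ℕ) (g : (Fin d → Bool) → (Fin d → Bool) → ℝ) : ℝ :=
  (∑ ε : Fin d → Bool, ∑ η : Fin d → Bool, g ε η) / (2 ^ d * 2 ^ d)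

/-- For `r² ≤ d` and `x, y` independent uniform on `{−r/√d, r/√d}^d`, the variance of
`exp(⟨x,y⟩/√d)`, i.e. `E[exp(⟨x,y⟩/√d)²] − E[exp(⟨x,y⟩/√d)]²`, is at most `exp 4`. -/
theorem stmt_8 (d : ℕ) (hd : 0 < d) (r : ℝ) (hr : 0 < r) (hrd : r ^ 2 ≤ (d : ℝ)) :
    hcAvg d (fun ε η =>
        (Real.exp ((∑ i : Fin d, hcVec d r ε i * hcVec d r η i) / Real.sqrt d)) ^ 2)
      - (hcAvg d (fun ε η =>
          Real.exp ((∑ i : Fin d, hcVec d r ε i * hcVec d r η i) / Real.sqrt d))) ^ 2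
      ≤ Real.exp 4 := by
  have hd0 : (0 : ℝ) < (d : ℝ) := by exact_mod_cast hd
  set sd : ℝ := Real.sqrt d with hsd_def
  have hsd : 0 < sd := Real.sqrt_pos.mpr hd0
  have hsdsq : sd * sd = (d : ℝ) := Real.mul_self_sqrt hd0.le
  set t : ℝ := 2 * r ^ 2 / ((d : ℝ) * sd) with ht_def
  -- inner product coordinates
  have hcoord : ∀ (ε η : Fin d → Bool) (i : Fin d),
      hcVec d r ε i * hcVec d r η i = if ε i = η i then r ^ 2 / d else -(r ^ 2 / d) := by
    intro ε η i
    have ha : (r / sd) * (r / sd) = r ^ 2 / d := by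
      rw [div_mul_div_comm, hsdsq, sq]
    simp only [hcVec]
    cases hε : ε i <;> cases hη : η i <;> simp [ha] <;> ring_nf <;> simp [ha] <;> ring
  -- the squared exponential factorizes
  have hterm : ∀ (ε η : Fin d → Bool),
      (Real.exp ((∑ i : Fin d, hcVec d r ε i * hcVec d r η i) / sd)) ^ 2
        = ∏ i : Fin d, Real.exp (if ε i = η i then t else -t) := by
    intro ε η
    rw [← Real.exp_sum, sq, ← Real.exp_add]
    congr 1
    have : ∀ i : Fin d, (if ε i = η i then t else -t)
        = 2 * (if ε i = η i then r ^ 2 / d else -(r ^ 2 / d)) / sd := by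
      intro i
      split <;> rw [ht_def] <;> field_simp <;> ring
    simp only [this, hcoord]
    rw [← Finset.sum_div, ← Finset.mul_sum]
    field_simp
    ring
  -- compute the average of the squared exponential
  have hsum : (∑ ε : Fin d → Bool, ∑ η : Fin d → Bool,
      ∏ i : Fin d, Real.exp (if ε i = η i then t else -t))
      = 2 ^ d * (Real.exp t + Real.exp (-t)) ^ d := by
    have hinner : ∀ ε : Fin d → Bool, (∑ η : Fin d → Bool,
        ∏ i : Fin d, Real.exp (if ε i = η i then t else -t))
        = (Real.exp t + Real.exp (-t)) ^ d := by
      intro ε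
      rw [← Fintype.prod_sum (fun i (b : Bool) => Real.exp (if ε i = b then t else -t))]
      have : ∀ i : Fin d, (∑ b : Bool, Real.exp (if ε i = b then t else -t))
          = Real.exp t + Real.exp (-t) := by
        intro i
        cases hε : ε i <;> simp [Fintype.sum_bool] <;> ring
      rw [Finset.prod_congr rfl fun i _ => this i, Finset.prod_const, Finset.card_univ,
        Fintype.card_fin]
    simp only [hinner, Finset.sum_const, Finset.card_univ, Fintype.card_fun,
      Fintype.card_bool, Fintype.card_fin, nsmul_eq_mul, Nat.cast_pow, Nat.cast_ofNat]
  have hE2 : hcAvg d (fun ε η =>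
      (Real.exp ((∑ i : Fin d, hcVec d r ε i * hcVec d r η i) / sd)) ^ 2)
      = Real.cosh t ^ d := by
    unfold hcAvg
    simp only [hterm]
    rw [hsum, Real.cosh_eq, div_pow]
    have h2 : (2 : ℝ) ^ d ≠ 0 := by positivity
    field_simp
  -- bound cosh t ^ d
  have hcosh : Real.cosh t ^ d ≤ Real.exp 4 := by
    have h1 : Real.cosh t ^ d ≤ Real.exp (t ^ 2 / 2) ^ d := by
      apply pow_le_pow_left₀ (Real.cosh_pos (x := t)).le
      exact Real.cosh_le_exp_half_sq t
    have h2 : Real.exp (t ^ 2 / 2) ^ d = Real.exp (d * (t ^ 2 / 2)) := by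
      rw [← Real.exp_nat_mul]
    have h3 : (d : ℝ) * (t ^ 2 / 2) ≤ 4 := by
      have ht2 : t ^ 2 = 4 * r ^ 4 / ((d : ℝ) ^ 3) := by
        rw [ht_def]
        rw [div_pow, mul_pow, mul_pow]
        have hsd2 : sd ^ 2 = (d : ℝ) := by rw [sq, hsdsq]
        rw [hsd2]; ring
      rw [ht2]
      have hr4 : r ^ 4 ≤ (d : ℝ) ^ 2 := by
        have := mul_le_mul hrd hrd (sq_nonneg r) hd0.le
        calc r ^ 4 = r ^ 2 * r ^ 2 := by ring
          _ ≤ (d : ℝ) * (d : ℝ) := this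
          _ = (d : ℝ) ^ 2 := by ring
      have key : (d:ℝ) * (4 * r ^ 4 / (d:ℝ) ^ 3 / 2) = 2 * r ^ 4 / (d:ℝ) ^ 2 := by
        field_simp; ring
      rw [key, div_le_iff₀ (pow_pos hd0 2)]
      nlinarith [pow_pos hd0 2]
    calc Real.cosh t ^ d ≤ Real.exp (t ^ 2 / 2) ^ d := h1
      _ = Real.exp (↑d * (t ^ 2 / 2)) := h2
      _ ≤ Real.exp 4 := Real.exp_le_exp.mpr h3
  have hsqnn : 0 ≤ (hcAvg d (fun ε η =>
      Real.exp ((∑ i : Fin d, hcVec d r ε i * hcVec d r η i) / sd))) ^ 2 := sq_nonneg _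
  have := hE2 ▸ hcosh
  linarith [this, hsqnn]
end

section
/- Let d, m, n be positive integers with m ≤ n, let r > 0 satisfy r² ≤ d, and fix a vector x ∈ {−r/√d, r/√d}^d. Let y_1, …, y_m be i.i.d. random vectors uniformly distributed on the discrete hypercube {−r/√d, r/√d}^d, and let σ_1, …, σ_m be i.i.d. uniform random signs in {−1, +1}, with all of y_1, …, y_m, σ_1, …, σ_m mutually independent. Set X = ∑_{j=1}^m σ_j · exp(⟨y_j, x⟩/√d). Then Pr[ |X| ≥ 1000·√n ] ≤ m/(1000·n). -/
open Finset Real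

private lemma sum_sign_mul_sign (m : ℕ) (j k : Fin m) (hjk : j ≠ k) :
    ∑ σ : Fin m → Bool, (if σ j then (1:ℝ) else -1) * (if σ k then (1:ℝ) else -1) = 0 := by
  set f : Fin m → Bool → ℝ := fun i b =>
    (if i = j then (if b then (1:ℝ) else -1) else 1) *
      (if i = k then (if b then (1:ℝ) else -1) else 1) with hf
  have h : ∀ σ : Fin m → Bool,
      (if σ j then (1:ℝ) else -1) * (if σ k then (1:ℝ) else -1) = ∏ i : Fin m, f i (σ i) := by
    intro σ
    simp only [hf]
    rw [prod_mul_distrib, Finset.prod_ite_eq' univ j, Finset.prod_ite_eq' univ k]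
    simp
  simp_rw [h]
  rw [← Fintype.prod_sum f]
  apply Finset.prod_eq_zero (Finset.mem_univ j)
  rw [Fintype.sum_bool]
  simp [hf, hjk]

private lemma sum_sq_signsum (m : ℕ) (a : Fin m → ℝ) :
    ∑ σ : Fin m → Bool, (∑ j, (if σ j then (1:ℝ) else -1) * a j)^2
      = 2^m * ∑ j, (a j)^2 := by
  have expand : ∀ σ : Fin m → Bool,
      (∑ j, (if σ j then (1:ℝ) else -1) * a j)^2
        = ∑ j, ∑ k, ((if σ j then (1:ℝ) else -1) * (if σ k then (1:ℝ) else -1)) * (a j * a k) := by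
    intro σ
    rw [sq, Finset.sum_mul_sum]
    apply Finset.sum_congr rfl; intro j _
    apply Finset.sum_congr rfl; intro k _
    ring
  simp_rw [expand]
  rw [Finset.sum_comm]
  have h1 : ∀ j : Fin m,
      (∑ σ : Fin m → Bool, ∑ k, ((if σ j then (1:ℝ) else -1) * (if σ k then (1:ℝ) else -1)) * (a j * a k))
        = ∑ k, (if j = k then (2:ℝ)^m * (a j * a k) else 0) := by
    intro j
    rw [Finset.sum_comm]
    apply Finset.sum_congr rfl; intro k _
    rw [← Finset.sum_mul]
    by_cases hjk : j = k
    · subst hjk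
      rw [if_pos rfl]
      have : ∀ σ : Fin m → Bool, (if σ j then (1:ℝ) else -1) * (if σ j then (1:ℝ) else -1) = 1 := by
        intro σ; cases h : σ j <;> simp [h]
      simp_rw [this]
      rw [Finset.sum_const]
      simp [Fintype.card_fun]
    · rw [if_neg hjk, sum_sign_mul_sign m j k hjk, zero_mul]
  simp_rw [h1, Finset.sum_ite_eq]
  rw [Finset.mul_sum]
  apply Finset.sum_congr rfl; intro j _
  simp [sq]

private lemma sum_eval_fun {β : Type*} [Fintype β] (m : ℕ) (j : Fin m) (g : β → ℝ) :
    ∑ Y : Fin m → β, g (Y j) = (Fintype.card β : ℝ)^(m-1) * ∑ y, g y := by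
  set f : Fin m → β → ℝ := fun i b => if i = j then g b else 1 with hf
  have h : ∀ Y : Fin m → β, g (Y j) = ∏ i : Fin m, f i (Y i) := by
    intro Y
    simp only [hf]
    rw [Finset.prod_ite_eq' univ j]
    simp
  simp_rw [h]
  rw [← Fintype.prod_sum f]
  rw [← Finset.mul_prod_erase univ _ (Finset.mem_univ j)]
  have h2 : ∀ i ∈ univ.erase j, (∑ b, f i b) = (Fintype.card β : ℝ) := by
    intro i hi
    simp only [hf, if_neg (Finset.mem_erase.1 hi).1]
    simp
  rw [Finset.prod_congr rfl h2, Finset.prod_const, Finset.card_erase_of_mem (Finset.mem_univ j)]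
  simp only [hf, if_pos rfl, Finset.card_univ, Fintype.card_fin]
  ring

private lemma sum_exp_sq (d : ℕ) (hd : 0 < d) (r : ℝ) (hr : 0 < r) (hrd : r^2 ≤ (d:ℝ))
    (x : Fin d → Bool) :
    ∑ y : Fin d → Bool,
        (Real.exp ((∑ i, hcVec d r y i * hcVec d r x i) / Real.sqrt d))^2
      ≤ 2^d * Real.exp 2 := by
  have hd0 : (0:ℝ) < d := by exact_mod_cast hd
  have hsd : (0:ℝ) < Real.sqrt d := Real.sqrt_pos.2 hd0
  set c : ℝ := 2 * (r^2 / d) / Real.sqrt d with hc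
  set f : Fin d → Bool → ℝ := fun i b =>
    Real.exp (2 * (hcVec d r (fun _ => b) i * hcVec d r x i) / Real.sqrt d) with hf
  have key : ∀ y : Fin d → Bool,
      (Real.exp ((∑ i, hcVec d r y i * hcVec d r x i) / Real.sqrt d))^2
        = ∏ i : Fin d, f i (y i) := by
    intro y
    rw [sq, ← Real.exp_add]
    have : (∑ i, hcVec d r y i * hcVec d r x i) / Real.sqrt d
        + (∑ i, hcVec d r y i * hcVec d r x i) / Real.sqrt d
        = ∑ i, 2 * (hcVec d r y i * hcVec d r x i) / Real.sqrt d := by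
      simp_rw [div_eq_mul_inv]
      rw [← Finset.sum_mul, ← Finset.mul_sum]
      ring
    rw [this, Real.exp_sum]
    apply Finset.prod_congr rfl; intro i _
    simp only [hf, hcVec]
  simp_rw [key]
  rw [← Fintype.prod_sum f]
  have hrd2 : (r/Real.sqrt d) * (r/Real.sqrt d) = r^2 / d := by
    rw [div_mul_div_comm, ← sq, ← sq, Real.sq_sqrt hd0.le]
  have e3 : 2 * ((r / Real.sqrt d) * (r / Real.sqrt d)) / Real.sqrt d = c := by
    rw [hrd2, hc]
  have e2 : 2 * (-(r / Real.sqrt d) * -(r / Real.sqrt d)) / Real.sqrt d = c := by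
    rw [neg_mul_neg, hrd2, hc]
  have e1 : 2 * ((r / Real.sqrt d) * -(r / Real.sqrt d)) / Real.sqrt d = -c := by
    rw [mul_neg, hrd2, hc]; ring
  have e4 : 2 * (-(r / Real.sqrt d) * (r / Real.sqrt d)) / Real.sqrt d = -c := by
    rw [neg_mul, hrd2, hc]; ring
  have factor : ∀ i : Fin d, (∑ b, f i b) = Real.exp c + Real.exp (-c) := by
    intro i
    rw [Fintype.sum_bool]
    cases hx : x i
    · simp only [hf, hcVec, hx, if_true, if_false, Bool.false_eq_true]
      rw [e1, e2]; ring
    · simp only [hf, hcVec, hx, if_true, if_false, Bool.false_eq_true]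
      rw [e3, e4]
  rw [Finset.prod_congr rfl (fun i _ => factor i)]
  rw [Finset.prod_const, Finset.card_univ, Fintype.card_fin]
  have hcosh : Real.exp c + Real.exp (-c) ≤ 2 * Real.exp (c^2/2) := by
    have h1 : Real.exp c + Real.exp (-c) = 2 * Real.cosh c := by
      rw [Real.cosh_eq]; ring
    rw [h1]
    have := Real.cosh_le_exp_half_sq c
    linarith
  calc (Real.exp c + Real.exp (-c))^d ≤ (2 * Real.exp (c^2/2))^d := by
        apply pow_le_pow_left₀ (by positivity) hcosh
    _ = 2^d * Real.exp (c^2/2)^d := mul_pow _ _ _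
    _ = 2^d * Real.exp (d * (c^2/2)) := by rw [← Real.exp_nat_mul]
    _ ≤ 2^d * Real.exp 2 := by
        apply mul_le_mul_of_nonneg_left _ (by positivity)
        apply Real.exp_le_exp.2
        have hc2 : c^2 = 4 * (r^2/d)^2 / d := by
          rw [hc, div_pow, Real.sq_sqrt hd0.le, mul_pow]
          norm_num
        rw [hc2]
        have hr2 : (r^2/d)^2 ≤ 1 := by
          apply pow_le_one₀ (by positivity)
          rw [div_le_one hd0]; exact hrd
        calc (d:ℝ) * (4 * (r^2/d)^2 / d / 2) = 2 * (r^2/d)^2 := by field_simp; ring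
          _ ≤ 2 := by linarith

private lemma count_bound (m : ℕ) (hm : 0 < m) {β : Type*} [Fintype β] [Nonempty β]
    [DecidableEq β] (E : β → ℝ) (A t : ℝ) (hA0 : 0 ≤ A) (ht : 0 ≤ t)
    (hA : ∑ y, (E y)^2 ≤ (Fintype.card β : ℝ) * A)
    (P : ((Fin m → β) × (Fin m → Bool)) → Prop) [DecidablePred P]
    (hP : ∀ ω, P ω → t ≤ |∑ j, (if ω.2 j then (1:ℝ) else -1) * E (ω.1 j)|) :
    ((univ.filter P).card : ℝ) * t^2
      ≤ (m : ℝ) * A * (Fintype.card ((Fin m → β) × (Fin m → Bool)) : ℝ) := by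
  set X : ((Fin m → β) × (Fin m → Bool)) → ℝ :=
    fun ω => ∑ j, (if ω.2 j then (1:ℝ) else -1) * E (ω.1 j) with hX
  have step1 : ((univ.filter P).card : ℝ) * t^2 ≤ ∑ ω, (X ω)^2 := by
    calc ((univ.filter P).card : ℝ) * t^2 = ∑ _ω ∈ univ.filter P, t^2 := by
          rw [Finset.sum_const, nsmul_eq_mul]
      _ ≤ ∑ ω ∈ univ.filter P, (X ω)^2 := by
          apply Finset.sum_le_sum
          intro ω hω
          have := hP ω (Finset.mem_filter.1 hω).2
          calc t^2 ≤ |X ω|^2 := pow_le_pow_left₀ ht this 2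
            _ = (X ω)^2 := sq_abs _
      _ ≤ ∑ ω, (X ω)^2 := Finset.sum_le_sum_of_subset_of_nonneg (Finset.filter_subset _ _)
            (fun ω _ _ => sq_nonneg _)
  have step2 : ∑ ω, (X ω)^2
      = 2^m * ((Fintype.card β : ℝ)^(m-1) * ((m:ℝ) * ∑ y, (E y)^2)) := by
    rw [Fintype.sum_prod_type]
    have inner : ∀ Y : Fin m → β,
        ∑ σ : Fin m → Bool, (X (Y, σ))^2 = 2^m * ∑ j, (E (Y j))^2 :=
      fun Y => sum_sq_signsum m (fun j => E (Y j))
    simp_rw [inner]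
    rw [← Finset.mul_sum, Finset.sum_comm]
    congr 1
    calc ∑ j : Fin m, ∑ Y : Fin m → β, (E (Y j))^2
        = ∑ j : Fin m, (Fintype.card β : ℝ)^(m-1) * ∑ y, (E y)^2 := by
          exact Finset.sum_congr rfl (fun j _ => sum_eval_fun m j (fun y => (E y)^2))
      _ = (Fintype.card β : ℝ)^(m-1) * ((m:ℝ) * ∑ y, (E y)^2) := by
          rw [Finset.sum_const, Finset.card_univ, Fintype.card_fin, nsmul_eq_mul]; ring
  have step3 : 2^m * ((Fintype.card β : ℝ)^(m-1) * ((m:ℝ) * ∑ y, (E y)^2))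
      ≤ (m : ℝ) * A * (Fintype.card ((Fin m → β) × (Fin m → Bool)) : ℝ) := by
    have hcard : (Fintype.card ((Fin m → β) × (Fin m → Bool)) : ℝ)
        = (Fintype.card β : ℝ)^m * 2^m := by
      rw [Fintype.card_prod, Fintype.card_fun, Fintype.card_fun]
      push_cast
      simp [Fintype.card_fin]
    rw [hcard]
    have hpow : (Fintype.card β : ℝ)^(m-1) * (Fintype.card β : ℝ)
        = (Fintype.card β : ℝ)^m := by
      rw [← pow_succ, Nat.sub_add_cancel hm]
    calc 2^m * ((Fintype.card β : ℝ)^(m-1) * ((m:ℝ) * ∑ y, (E y)^2))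
        ≤ 2^m * ((Fintype.card β : ℝ)^(m-1) * ((m:ℝ) * ((Fintype.card β : ℝ) * A))) := by
          apply mul_le_mul_of_nonneg_left _ (by positivity)
          apply mul_le_mul_of_nonneg_left _ (by positivity)
          exact mul_le_mul_of_nonneg_left hA (by positivity)
      _ = (m : ℝ) * A * ((Fintype.card β : ℝ)^m * 2^m) := by rw [← hpow]; ring
  linarith

/-- Chebyshev-type tail bound of Lemma 5.3: fix `x` in the hypercube `{−r/√d, r/√d}^d`
(with `r² ≤ d`, `m ≤ n`); for i.i.d. uniform hypercube vectors `y₁, …, y_m` and i.i.d.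
uniform signs `σ₁, …, σ_m` (all independent, encoded by a uniform random element of
`(Fin m → (Fin d → Bool)) × (Fin m → Bool)`), the signed sum
`X = ∑_j σ_j exp(⟨y_j, x⟩/√d)` satisfies `Pr[|X| ≥ 1000√n] ≤ m/(1000 n)`. -/
theorem stmt_9 (d m n : ℕ) (hd : 0 < d) (hm : 0 < m) (hn : 0 < n) (hmn : m ≤ n)
    (r : ℝ) (hr : 0 < r) (hrd : r ^ 2 ≤ (d : ℝ)) (x : Fin d → Bool) :
    (PMF.uniformOfFintype ((Fin m → (Fin d → Bool)) × (Fin m → Bool))).toOuterMeasure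
        {ω : (Fin m → (Fin d → Bool)) × (Fin m → Bool) |
          1000 * Real.sqrt n ≤
            |∑ j : Fin m, (if ω.2 j then (1 : ℝ) else -1) *
              Real.exp ((∑ i : Fin d, hcVec d r (ω.1 j) i * hcVec d r x i) / Real.sqrt d)|}
      ≤ ENNReal.ofReal ((m : ℝ) / (1000 * n)) := by
  classical
  have hn0 : (0:ℝ) < n := by exact_mod_cast hn
  rw [PMF.toOuterMeasure_uniformOfFintype_apply]
  have hΩpos : 0 < Fintype.card ((Fin m → (Fin d → Bool)) × (Fin m → Bool)) :=
    Fintype.card_pos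
  have hcard : Fintype.card
      ({ω : (Fin m → (Fin d → Bool)) × (Fin m → Bool) |
          1000 * Real.sqrt n ≤
            |∑ j : Fin m, (if ω.2 j then (1 : ℝ) else -1) *
              Real.exp ((∑ i : Fin d, hcVec d r (ω.1 j) i * hcVec d r x i) / Real.sqrt d)|} :
        Set ((Fin m → (Fin d → Bool)) × (Fin m → Bool)))
      = (univ.filter (fun ω : (Fin m → (Fin d → Bool)) × (Fin m → Bool) =>
          1000 * Real.sqrt n ≤
            |∑ j : Fin m, (if ω.2 j then (1 : ℝ) else -1) *
              Real.exp ((∑ i : Fin d, hcVec d r (ω.1 j) i * hcVec d r x i) / Real.sqrt d)|)).card := by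
    rw [← Fintype.card_subtype]
    apply Fintype.card_congr
    exact Equiv.refl _
  rw [hcard]
  have hcardβ : (Fintype.card (Fin d → Bool) : ℝ) = 2^d := by
    rw [Fintype.card_fun]
    simp
  have hA : ∑ y : Fin d → Bool,
      (Real.exp ((∑ i, hcVec d r y i * hcVec d r x i) / Real.sqrt d))^2
        ≤ (Fintype.card (Fin d → Bool) : ℝ) * Real.exp 2 := by
    rw [hcardβ]
    exact sum_exp_sq d hd r hr hrd x
  have hkey := count_bound m hm
    (fun y => Real.exp ((∑ i, hcVec d r y i * hcVec d r x i) / Real.sqrt d))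
    (Real.exp 2) (1000 * Real.sqrt n) (by positivity) (by positivity) hA
    (fun ω : (Fin m → (Fin d → Bool)) × (Fin m → Bool) =>
          1000 * Real.sqrt n ≤
            |∑ j : Fin m, (if ω.2 j then (1 : ℝ) else -1) *
              Real.exp ((∑ i : Fin d, hcVec d r (ω.1 j) i * hcVec d r x i) / Real.sqrt d)|)
    (fun ω h => h)
  have hsq : (1000 * Real.sqrt n)^2 = 1000000 * n := by
    rw [mul_pow, Real.sq_sqrt hn0.le]; norm_num
  rw [hsq] at hkey
  have hexp : Real.exp 2 ≤ 1000 := by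
    have h1 : Real.exp 1 < 2.7182818286 := Real.exp_one_lt_d9
    have h2 : Real.exp 2 = Real.exp 1 * Real.exp 1 := by
      rw [← Real.exp_add]; norm_num
    nlinarith [Real.exp_pos 1]
  have hreal : (((univ.filter (fun ω : (Fin m → (Fin d → Bool)) × (Fin m → Bool) =>
          1000 * Real.sqrt n ≤
            |∑ j : Fin m, (if ω.2 j then (1 : ℝ) else -1) *
              Real.exp ((∑ i : Fin d, hcVec d r (ω.1 j) i * hcVec d r x i) / Real.sqrt d)|)).card : ℝ))
      ≤ (m:ℝ) / (1000 * n)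
          * (Fintype.card ((Fin m → (Fin d → Bool)) × (Fin m → Bool)) : ℝ) := by
    rw [div_mul_eq_mul_div, le_div_iff₀ (by positivity)]
    have hc0 : (0:ℝ) ≤ (Fintype.card ((Fin m → (Fin d → Bool)) × (Fin m → Bool)) : ℝ) := by
      positivity
    have hm0 : (0:ℝ) ≤ (m:ℝ) := by positivity
    have h3 : (m:ℝ) * Real.exp 2
          * (Fintype.card ((Fin m → (Fin d → Bool)) × (Fin m → Bool)) : ℝ)
        ≤ (m:ℝ) * 1000 * (Fintype.card ((Fin m → (Fin d → Bool)) × (Fin m → Bool)) : ℝ) := by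
      apply mul_le_mul_of_nonneg_right _ hc0
      exact mul_le_mul_of_nonneg_left hexp hm0
    have h4 := hkey.trans h3
    linarith
  rw [ENNReal.div_le_iff (by exact_mod_cast hΩpos.ne') (ENNReal.natCast_ne_top _)]
  calc (((univ.filter (fun ω : (Fin m → (Fin d → Bool)) × (Fin m → Bool) =>
          1000 * Real.sqrt n ≤
            |∑ j : Fin m, (if ω.2 j then (1 : ℝ) else -1) *
              Real.exp ((∑ i : Fin d, hcVec d r (ω.1 j) i * hcVec d r x i) / Real.sqrt d)|)).card : ENNReal))
      = ENNReal.ofReal (((univ.filter (fun ω : (Fin m → (Fin d → Bool)) × (Fin m → Bool) =>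
          1000 * Real.sqrt n ≤
            |∑ j : Fin m, (if ω.2 j then (1 : ℝ) else -1) *
              Real.exp ((∑ i : Fin d, hcVec d r (ω.1 j) i * hcVec d r x i) / Real.sqrt d)|)).card : ℝ)) := by
        rw [ENNReal.ofReal_natCast]
    _ ≤ ENNReal.ofReal ((m:ℝ) / (1000 * n)
          * (Fintype.card ((Fin m → (Fin d → Bool)) × (Fin m → Bool)) : ℝ)) :=
        ENNReal.ofReal_le_ofReal hreal
    _ = ENNReal.ofReal ((m:ℝ) / (1000 * n))
          * ENNReal.ofReal ((Fintype.card ((Fin m → (Fin d → Bool)) × (Fin m → Bool)) : ℝ)) := by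
        rw [ENNReal.ofReal_mul (by positivity)]
    _ = ENNReal.ofReal ((m:ℝ) / (1000 * n))
          * ((Fintype.card ((Fin m → (Fin d → Bool)) × (Fin m → Bool)) : ENNReal)) := by
        rw [ENNReal.ofReal_natCast]
end

section
/- Let d, m be positive integers with m ≥ 10^5, let r > 0 satisfy r² ≤ d, and fix a vector x ∈ {−r/√d, r/√d}^d. Let y_1, …, y_m be i.i.d. random vectors uniformly distributed on the discrete hypercube {−r/√d, r/√d}^d, and set S = ∑_{j=1}^m exp(⟨y_j, x⟩/√d). Then Pr[ m/5 ≤ S ≤ 20·m ] ≥ 0.999. -/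
open Real Finset

section helpers

lemma cosh_small {t : ℝ} (ht : |t| ≤ 1) :
    Real.exp t + Real.exp (-t) ≤ 2 + 2 * t ^ 2 := by
  have h1 := Real.exp_bound ht (by norm_num : 0 < 3)
  have h2 := Real.exp_bound (x := -t) (by rwa [abs_neg]) (by norm_num : 0 < 3)
  simp only [Finset.sum_range_succ, Finset.sum_range_zero] at h1 h2
  norm_num [Nat.factorial] at h1 h2
  have h3 : |t| ^ 3 ≤ t ^ 2 := by
    have : |t| ^ 3 ≤ |t| ^ 2 := pow_le_pow_of_le_one (abs_nonneg t) ht (by norm_num)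
    simpa [sq_abs] using this
  have e1 := abs_le.1 h1
  have e2 := abs_le.1 h2
  nlinarith [e1.2, e2.2]

lemma cosh_mid {t : ℝ} (ht0 : 0 ≤ t) (ht2 : t ≤ 2) :
    Real.exp t + Real.exp (-t) ≤ Real.exp 2 + Real.exp (-2) := by
  have ha : 1 ≤ Real.exp t := Real.one_le_exp ht0
  have hab : Real.exp t ≤ Real.exp 2 := Real.exp_le_exp.2 ht2
  rw [Real.exp_neg, Real.exp_neg]
  set a := Real.exp t
  set b := Real.exp 2
  have ha0 : (0:ℝ) < a := lt_of_lt_of_le one_pos ha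
  have hb0 : (0:ℝ) < b := lt_of_lt_of_le ha0 hab
  have hinv : a⁻¹ * b⁻¹ ≤ 1 := by
    rw [← mul_inv]
    have h1 : (1:ℝ) ≤ a * b := by nlinarith
    exact inv_le_one_of_one_le₀ h1
  have hdiff : a⁻¹ - b⁻¹ = (b - a) * (a⁻¹ * b⁻¹) := by field_simp
  have := mul_le_mul_of_nonneg_left hinv (sub_nonneg.2 hab)
  linarith [hdiff]

lemma exp_two_lt : Real.exp 2 < 7.3890561 := by
  have h := Real.exp_one_lt_d9
  have : Real.exp 2 = Real.exp 1 * Real.exp 1 := by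
    rw [← Real.exp_add]; norm_num
  rw [this]; nlinarith [Real.exp_pos 1]

lemma exp_neg_two_lt : Real.exp (-2) < 0.14 := by
  have h := Real.exp_one_gt_d9
  have h2 : (7.38905609 : ℝ) < Real.exp 2 := by
    have : Real.exp 2 = Real.exp 1 * Real.exp 1 := by rw [← Real.exp_add]; norm_num
    rw [this]; nlinarith
  rw [Real.exp_neg]
  rw [inv_lt_comm₀ (by positivity) (by norm_num)]
  linarith

lemma exp_four_lt : Real.exp 4 < 55 := by
  have : Real.exp 4 = Real.exp 2 * Real.exp 2 := by rw [← Real.exp_add]; norm_num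
  rw [this]; nlinarith [exp_two_lt, Real.exp_pos 2]

lemma count_var {A : Type*} [Fintype A] (m : ℕ) (g : A → ℝ) (hg0 : ∑ ε : A, g ε = 0) :
    ∑ ω : Fin m → A, (∑ j, g (ω j))^2
      = m * ((∑ ε : A, g ε ^ 2) * (Fintype.card A : ℝ)^(m-1)) := by
  classical
  have hinner : ∀ j k : Fin m,
      (∑ ω : Fin m → A, g (ω j) * g (ω k))
        = if j = k then (∑ ε : A, g ε ^ 2) * (Fintype.card A : ℝ) ^ (m-1) else 0 := by
    intro j k
    have step1 : ∀ ω : Fin m → A, g (ω j) * g (ω k)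
        = ∏ j', ((if j' = j then g (ω j') else 1) * (if j' = k then g (ω j') else 1)) := by
      intro ω
      rw [Finset.prod_mul_distrib, Finset.prod_ite_eq' Finset.univ j (fun j' => g (ω j')),
        Finset.prod_ite_eq' Finset.univ k (fun j' => g (ω j'))]
      simp
    rw [Finset.sum_congr rfl fun ω _ => step1 ω]
    rw [← Fintype.piFinset_univ, Finset.sum_prod_piFinset Finset.univ
      (fun (j' : Fin m) (a : A) => (if j' = j then g a else 1) * (if j' = k then g a else 1))]
    by_cases hjk : j = k
    · subst hjk
      rw [if_pos rfl]
      rw [← Finset.mul_prod_erase Finset.univ _ (Finset.mem_univ j)]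
      have hj : (∑ a : A, (if j = j then g a else 1) * (if j = j then g a else 1))
          = ∑ ε : A, g ε ^ 2 := by simp [sq]
      have hoth : ∀ j' ∈ Finset.univ.erase j,
          (∑ a : A, (if j' = j then g a else 1) * (if j' = j then g a else 1))
            = (Fintype.card A : ℝ) := by
        intro j' hj'
        have h := (Finset.mem_erase.1 hj').1
        simp [h, Finset.card_univ]
      rw [hj, Finset.prod_congr rfl hoth, Finset.prod_const,
        Finset.card_erase_of_mem (Finset.mem_univ j), Finset.card_univ, Fintype.card_fin]
    · rw [if_neg hjk]
      refine Finset.prod_eq_zero (Finset.mem_univ j) ?_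
      simp [hjk, hg0]
  have expand : ∀ ω : Fin m → A, (∑ j, g (ω j))^2
      = ∑ j : Fin m, ∑ k : Fin m, g (ω j) * g (ω k) := by
    intro ω; rw [sq, Finset.sum_mul_sum]
  rw [Finset.sum_congr rfl fun ω _ => expand ω]
  rw [Finset.sum_comm]
  rw [Finset.sum_congr rfl fun j (_ : j ∈ Finset.univ) => Finset.sum_comm]
  rw [Finset.sum_congr rfl fun j (_ : j ∈ Finset.univ) =>
    Finset.sum_congr rfl fun k (_ : k ∈ Finset.univ) => hinner j k]
  simp [Finset.sum_ite_eq, Finset.card_univ, mul_comm]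

end helpers

set_option maxHeartbeats 2000000 in
/-- Concentration of the softmax normalization over random keys: fix `x` in the hypercube
`{−r/√d, r/√d}^d` (with `r² ≤ d`, `m ≥ 10^5`); for i.i.d. uniform hypercube vectors
`y₁, …, y_m`, the sum `S = ∑_j exp(⟨y_j, x⟩/√d)` satisfies
`Pr[m/5 ≤ S ≤ 20 m] ≥ 0.999`. -/
theorem stmt_10 (d m : ℕ) (hd : 0 < d) (hm : 10 ^ 5 ≤ m)
    (r : ℝ) (hr : 0 < r) (hrd : r ^ 2 ≤ (d : ℝ)) (x : Fin d → Bool) :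
    ENNReal.ofReal 0.999 ≤
      (PMF.uniformOfFintype (Fin m → (Fin d → Bool))).toOuterMeasure
        {ω : Fin m → (Fin d → Bool) |
          (m : ℝ) / 5 ≤
              ∑ j : Fin m,
                Real.exp ((∑ i : Fin d, hcVec d r (ω j) i * hcVec d r x i) / Real.sqrt d)
          ∧ ∑ j : Fin m,
                Real.exp ((∑ i : Fin d, hcVec d r (ω j) i * hcVec d r x i) / Real.sqrt d)
              ≤ 20 * m} := by
  classical
  have hm1 : 1 ≤ m := le_trans (by norm_num) hm
  have hm0 : (0:ℝ) < m := by exact_mod_cast lt_of_lt_of_le (by norm_num) hm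
  have hmge : (100000:ℝ) ≤ m := by exact_mod_cast hm
  have hd0 : (0:ℝ) < (d:ℝ) := by exact_mod_cast hd
  have hsd : (0:ℝ) < Real.sqrt d := Real.sqrt_pos.2 hd0
  have hsq : Real.sqrt d * Real.sqrt d = (d:ℝ) := Real.mul_self_sqrt hd0.le
  set u : ℝ := r ^ 2 / d with hu
  have hu0 : 0 < u := by positivity
  have hu1 : u ≤ 1 := by rw [hu, div_le_one hd0]; exact hrd
  set c : ℝ := u / Real.sqrt d with hc
  have hc0 : 0 < c := by positivity
  have hcsd : c * Real.sqrt d = u := by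
    rw [hc, div_mul_cancel₀ _ hsd.ne']
  have hdc2 : (d:ℝ) * c ^ 2 = u ^ 2 := by
    rw [hc, div_pow, sq (Real.sqrt d), hsq]
    field_simp
  clear_value u c
  set f : (Fin d → Bool) → ℝ := fun ε => Real.exp (∑ i, if ε i = x i then c else -c) with hf
  have hfpos : ∀ ε, 0 < f ε := fun ε => Real.exp_pos _
  have hrr : (r / Real.sqrt d) * (r / Real.sqrt d) = u := by
    rw [div_mul_div_comm, hsq, hu, pow_two]
  have hexp : ∀ ε : Fin d → Bool,
      Real.exp ((∑ i, hcVec d r ε i * hcVec d r x i) / Real.sqrt d) = f ε := by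
    intro ε
    show _ = Real.exp (∑ i, if ε i = x i then c else -c)
    congr 1
    rw [Finset.sum_div]
    refine Finset.sum_congr rfl fun i _ => ?_
    simp only [hcVec]
    cases h1 : ε i <;> cases h2 : x i <;>
      simp [h1, h2, hrr, hc, neg_div]
  have hfprod : ∀ ε : Fin d → Bool,
      f ε = ∏ i, (if ε i = x i then Real.exp c else Real.exp (-c)) := by
    intro ε
    show Real.exp (∑ i, if ε i = x i then c else -c) = _
    rw [Real.exp_sum]
    exact Finset.prod_congr rfl fun i _ => (apply_ite Real.exp _ _ _)
  have hsum_gen : ∀ a b : ℝ,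
      (∑ ε : Fin d → Bool, ∏ i, (if ε i = x i then a else b)) = (a + b) ^ d := by
    intro a b
    rw [← Fintype.piFinset_univ,
      Finset.sum_prod_piFinset Finset.univ (fun i (bb : Bool) => if bb = x i then a else b)]
    have h2 : ∀ i : Fin d, (∑ bb : Bool, if bb = x i then a else b) = a + b := by
      intro i; cases h : x i <;> simp [h, add_comm]
    rw [Finset.prod_congr rfl fun i _ => h2 i, Finset.prod_const, Finset.card_univ,
      Fintype.card_fin]
  have hfsq : ∀ ε : Fin d → Bool,
      f ε ^ 2 = ∏ i, (if ε i = x i then Real.exp c else Real.exp (-c)) ^ 2 := by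
    intro ε; rw [hfprod, ← Finset.prod_pow]
  clear_value f
  have hsum1 : ∑ ε : Fin d → Bool, f ε = (Real.exp c + Real.exp (-c)) ^ d := by
    rw [Finset.sum_congr rfl fun ε _ => hfprod ε]; exact hsum_gen _ _
  have hsum2 : ∑ ε : Fin d → Bool, f ε ^ 2
      = (Real.exp (2*c) + Real.exp (-(2*c))) ^ d := by
    have hsq2 : ∀ ε : Fin d → Bool,
        f ε ^ 2 = ∏ i, (if ε i = x i then Real.exp (2*c) else Real.exp (-(2*c))) := by
      intro ε
      rw [hfprod, ← Finset.prod_pow]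
      refine Finset.prod_congr rfl fun i _ => ?_
      rw [apply_ite (· ^ 2)]
      congr 1 <;> · rw [sq, ← Real.exp_add]; congr 1; ring
    rw [Finset.sum_congr rfl fun ε _ => hsq2 ε]; exact hsum_gen _ _
  have h2d0 : (0:ℝ) < 2 ^ d := by positivity
  set μ : ℝ := (∑ ε : Fin d → Bool, f ε) / 2 ^ d with hμ
  have hμ1 : 1 ≤ μ := by
    rw [hμ, le_div_iff₀ h2d0, one_mul, hsum1]
    refine pow_le_pow_left₀ (by norm_num) ?_ d
    nlinarith [Real.add_one_le_exp c, Real.add_one_le_exp (-c)]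
  -- second moment bound
  have hM2 : ∑ ε : Fin d → Bool, f ε ^ 2 ≤ 64 * 2 ^ d := by
    rw [hsum2]
    rcases le_or_gt 4 d with h4 | h4
    · have hsd2 : (2:ℝ) ≤ Real.sqrt d := by
        rw [show (2:ℝ) = Real.sqrt 4 by
          rw [show (4:ℝ) = 2^2 by norm_num, Real.sqrt_sq (by norm_num)]]
        exact Real.sqrt_le_sqrt (by exact_mod_cast h4)
      have h2c1 : 2 * c ≤ 1 := by nlinarith [hcsd, hc0]
      have hcs := cosh_small (t := 2*c) (by rw [abs_of_nonneg (by positivity)]; exact h2c1)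
      have hstep : Real.exp (2*c) + Real.exp (-(2*c)) ≤ 2 * Real.exp (4*c^2) := by
        nlinarith [Real.add_one_le_exp (4*c^2)]
      calc (Real.exp (2*c) + Real.exp (-(2*c))) ^ d
          ≤ (2 * Real.exp (4*c^2)) ^ d := pow_le_pow_left₀ (by positivity) hstep d
        _ = 2 ^ d * Real.exp (4*c^2) ^ d := mul_pow _ _ _
        _ = 2 ^ d * Real.exp (d * (4*c^2)) := by rw [← Real.exp_nat_mul (4*c^2) d]
        _ ≤ 2 ^ d * Real.exp 4 := by
            have h44 : (d:ℝ) * (4*c^2) ≤ 4 := by nlinarith [hdc2, hu1, hu0]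
            exact mul_le_mul_of_nonneg_left (Real.exp_le_exp.2 h44) h2d0.le
        _ ≤ 64 * 2 ^ d := by nlinarith [exp_four_lt, h2d0, Real.exp_pos 4]
    · have hsd1 : (1:ℝ) ≤ Real.sqrt d := by
        rw [show (1:ℝ) = Real.sqrt 1 by rw [Real.sqrt_one]]
        exact Real.sqrt_le_sqrt (by exact_mod_cast hd)
      have hcu : c ≤ u := by
        rw [hc]; exact div_le_self hu0.le hsd1
      have h2c2 : 2 * c ≤ 2 := by nlinarith
      have hcm := cosh_mid (t := 2*c) (by positivity) h2c2
      have hE : Real.exp (2*c) + Real.exp (-(2*c)) ≤ 7.6 := by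
        nlinarith [exp_two_lt, exp_neg_two_lt]
      have hd3 : d ≤ 3 := by omega
      calc (Real.exp (2*c) + Real.exp (-(2*c))) ^ d
          ≤ (7.6:ℝ) ^ d := pow_le_pow_left₀ (by positivity) hE d
        _ = (3.8:ℝ) ^ d * 2 ^ d := by rw [← mul_pow]; norm_num
        _ ≤ (3.8:ℝ) ^ 3 * 2 ^ d := by
            refine mul_le_mul_of_nonneg_right (pow_le_pow_right₀ (by norm_num) hd3) h2d0.le
        _ ≤ 64 * 2 ^ d := by nlinarith [h2d0]
  have hcardA : (Fintype.card (Fin d → Bool)) = 2 ^ d := by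
    simp [Fintype.card_fun]
  have hsumf0 : 0 ≤ ∑ ε : Fin d → Bool, f ε :=
    Finset.sum_nonneg fun ε _ => (hfpos ε).le
  have hμ8 : μ ≤ 8 := by
    have hcs := sq_sum_le_card_mul_sum_sq (s := Finset.univ) (f := f)
    rw [Finset.card_univ, hcardA] at hcs
    push_cast at hcs
    have h8 : (∑ ε : Fin d → Bool, f ε) ≤ 8 * 2^d := by nlinarith [hM2, h2d0, hsumf0]
    rw [hμ, div_le_iff₀ h2d0]
    linarith
  clear_value μ
  set g : (Fin d → Bool) → ℝ := fun ε => f ε - μ with hg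
  have hsfμ : ∑ ε : Fin d → Bool, f ε = 2 ^ d * μ := by
    rw [hμ]; field_simp
  have hg0 : ∑ ε : Fin d → Bool, g ε = 0 := by
    have : ∀ ε : Fin d → Bool, g ε = f ε - μ := fun ε => rfl
    rw [Finset.sum_congr rfl fun ε _ => this ε]
    rw [Finset.sum_sub_distrib, Finset.sum_const, Finset.card_univ, hcardA, hsfμ,
      nsmul_eq_mul]
    push_cast
    ring
  have hg2 : ∑ ε : Fin d → Bool, g ε ^ 2 ≤ 64 * 2 ^ d := by
    have hptw : ∀ ε : Fin d → Bool, g ε ^ 2 = f ε ^ 2 - 2*μ*f ε + μ^2 := by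
      intro ε; show (f ε - μ)^2 = _; ring
    rw [Finset.sum_congr rfl fun ε _ => hptw ε]
    rw [Finset.sum_add_distrib, Finset.sum_sub_distrib, ← Finset.mul_sum,
      Finset.sum_const, Finset.card_univ, hcardA, nsmul_eq_mul, hsfμ]
    push_cast
    nlinarith [hM2, h2d0, sq_nonneg μ, mul_nonneg h2d0.le (sq_nonneg μ)]
  set F : (Fin m → Fin d → Bool) → ℝ := fun ω => ∑ j, f (ω j) with hF
  have hFg : ∀ ω : Fin m → Fin d → Bool, F ω - m * μ = ∑ j, g (ω j) := by
    intro ω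
    show (∑ j, f (ω j)) - m * μ = ∑ j, (f (ω j) - μ)
    rw [Finset.sum_sub_distrib, Finset.sum_const, Finset.card_univ, Fintype.card_fin,
      nsmul_eq_mul]
  clear_value g F
  have hcount : ∑ ω : Fin m → Fin d → Bool, (F ω - m*μ)^2
      = m * ((∑ ε : Fin d → Bool, g ε ^ 2) * ((2:ℝ)^d)^(m-1)) := by
    rw [Finset.sum_congr rfl fun ω _ => by rw [hFg ω]]
    have := count_var m g hg0
    rw [hcardA] at this
    push_cast at this ⊢
    exact this
  -- Chebyshev
  set p : (Fin m → Fin d → Bool) → Prop :=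
    fun ω => (m:ℝ)/5 ≤ F ω ∧ F ω ≤ 20*m with hp
  set Bad : Finset (Fin m → Fin d → Bool) := Finset.filter (fun ω => ¬ p ω) Finset.univ
    with hBadDef
  have hdev : ∀ ω ∈ Bad, (0.64:ℝ) * m^2 ≤ (F ω - m*μ)^2 := by
    intro ω hω
    rw [hBadDef, Finset.mem_filter] at hω
    have h := hω.2
    rw [hp] at h
    by_cases h1 : (m:ℝ)/5 ≤ F ω
    · have h2 : ¬ F ω ≤ 20*m := fun h2 => h ⟨h1, h2⟩
      push_neg at h2
      have hX : 12*(m:ℝ) ≤ F ω - m*μ := by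
        nlinarith [mul_le_mul_of_nonneg_left hμ8 hm0.le]
      nlinarith [hX, hm0, mul_pos hm0 hm0]
    · push_neg at h1
      have hX : F ω - m*μ ≤ -(0.8*(m:ℝ)) := by
        nlinarith [mul_le_mul_of_nonneg_left hμ1 hm0.le]
      nlinarith [hX, hm0, mul_pos hm0 hm0]
  have hpow : ((2:ℝ)^d)^(m-1) * (2:ℝ)^d = ((2:ℝ)^d)^m := by
    rw [← pow_succ, Nat.sub_add_cancel hm1]
  have hPm0 : (0:ℝ) < ((2:ℝ)^d)^m := by positivity
  have hchain : (Bad.card : ℝ) * (0.64 * m^2) ≤ 64 * m * ((2:ℝ)^d)^m := by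
    calc (Bad.card : ℝ) * (0.64*m^2)
        ≤ ∑ ω ∈ Bad, (F ω - m*μ)^2 := by
          have := Finset.card_nsmul_le_sum Bad (fun ω => (F ω - m*μ)^2) (0.64*m^2) hdev
          rwa [nsmul_eq_mul] at this
      _ ≤ ∑ ω : Fin m → Fin d → Bool, (F ω - m*μ)^2 :=
          Finset.sum_le_sum_of_subset_of_nonneg (Finset.subset_univ _)
            (fun ω _ _ => sq_nonneg _)
      _ = m * ((∑ ε : Fin d → Bool, g ε ^ 2) * ((2:ℝ)^d)^(m-1)) := hcount
      _ ≤ m * ((64 * 2^d) * ((2:ℝ)^d)^(m-1)) := by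
          refine mul_le_mul_of_nonneg_left ?_ hm0.le
          refine mul_le_mul_of_nonneg_right hg2 (by positivity)
      _ = 64 * m * ((2:ℝ)^d)^m := by
          have hp2 : ((2:ℝ)^d)^(m-1) * (2:ℝ)^d = ((2:ℝ)^d)^m := by
            rw [← pow_succ, Nat.sub_add_cancel hm1]
          linear_combination (64*(m:ℝ)) * hp2
  have hBad1000 : (Bad.card : ℝ) * 1000 ≤ ((2:ℝ)^d)^m := by
    have hB0 : (0:ℝ) ≤ (Bad.card : ℝ) := Nat.cast_nonneg _
    nlinarith [hchain, mul_nonneg hB0 hm0.le, hPm0, hmge, hm0,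
      mul_le_mul_of_nonneg_left hmge (mul_nonneg hB0 hm0.le)]
  -- identify the set in the goal
  have hsetrw : ∀ ω : Fin m → Fin d → Bool,
      (∑ j : Fin m,
        Real.exp ((∑ i : Fin d, hcVec d r (ω j) i * hcVec d r x i) / Real.sqrt d)) = F ω := by
    intro ω
    rw [hF]
    exact Finset.sum_congr rfl fun j _ => hexp (ω j)
  have hseteq : {ω : Fin m → Fin d → Bool |
          (m : ℝ) / 5 ≤
              ∑ j : Fin m,
                Real.exp ((∑ i : Fin d, hcVec d r (ω j) i * hcVec d r x i) / Real.sqrt d)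
          ∧ ∑ j : Fin m,
                Real.exp ((∑ i : Fin d, hcVec d r (ω j) i * hcVec d r x i) / Real.sqrt d)
              ≤ 20 * m} = {ω : Fin m → Fin d → Bool | p ω} := by
    ext ω
    rw [Set.mem_setOf_eq, Set.mem_setOf_eq, hsetrw ω, hp]
  rw [hseteq, PMF.toOuterMeasure_uniformOfFintype_apply]
  have hcardΩ : Fintype.card (Fin m → Fin d → Bool) = (2^d)^m := by
    simp [Fintype.card_fun, hcardA]
  have hGoodcard : ∀ (inst : Fintype ↥{ω : Fin m → Fin d → Bool | p ω}),
      @Fintype.card _ inst = (Finset.filter p Finset.univ).card := by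
    intro inst
    rw [← Set.toFinset_card]
    congr 1
    ext ω
    simp [Set.mem_toFinset]
  have hsplit : (Finset.filter p Finset.univ).card + Bad.card
      = Fintype.card (Fin m → Fin d → Bool) := by
    rw [hBadDef, Finset.card_filter_add_card_filter_not, Finset.card_univ]
  have hreal : 0.999 * (Fintype.card (Fin m → Fin d → Bool) : ℝ)
      ≤ ((Finset.filter p Finset.univ).card : ℝ) := by
    have hcast : ((Finset.filter p Finset.univ).card : ℝ) + (Bad.card : ℝ)
        = (Fintype.card (Fin m → Fin d → Bool) : ℝ) := by exact_mod_cast hsplit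
    have hPcast : (Fintype.card (Fin m → Fin d → Bool) : ℝ) = ((2:ℝ)^d)^m := by
      rw [hcardΩ]; push_cast; ring
    rw [hPcast] at hcast ⊢
    linarith [hBad1000]
  have hne0 : (Fintype.card (Fin m → Fin d → Bool) : ENNReal) ≠ 0 :=
    Nat.cast_ne_zero.2 Fintype.card_ne_zero
  have hnetop : (Fintype.card (Fin m → Fin d → Bool) : ENNReal) ≠ ⊤ := ENNReal.natCast_ne_top _
  rw [ENNReal.le_div_iff_mul_le (Or.inl hne0) (Or.inl hnetop), hGoodcard _]
  calc ENNReal.ofReal 0.999 * (Fintype.card (Fin m → Fin d → Bool) : ENNReal)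
      = ENNReal.ofReal (0.999 * (Fintype.card (Fin m → Fin d → Bool) : ℝ)) := by
        rw [ENNReal.ofReal_mul (by norm_num), ENNReal.ofReal_natCast]
    _ ≤ ENNReal.ofReal (((Finset.filter p Finset.univ).card : ℕ) : ℝ) :=
        ENNReal.ofReal_le_ofReal hreal
    _ = (((Finset.filter p Finset.univ).card : ℕ) : ENNReal) := ENNReal.ofReal_natCast _
end

section
/- Let d, m be positive integers with m ≥ 5·10^6, let r > 0 satisfy r² ≤ d, and fix a vector x ∈ {−r/√d, r/√d}^d. Let y_1, …, y_m be i.i.d. random vectors uniformly distributed on the discrete hypercube {−r/√d, r/√d}^d, and set S = ∑_{j=1}^m exp(2·⟨y_j, x⟩/√d). Then Pr[ m/5 ≤ S ≤ 200·m ] ≥ 0.999. -/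
open Finset Real
open scoped ENNReal NNReal

lemma marg {ι K : Type*} [Fintype ι] [Fintype K] [DecidableEq ι] (j : ι) (g : K → ℝ) :
    ∑ ω : ι → K, g (ω j) = (Fintype.card K : ℝ) ^ (Fintype.card ι - 1) * ∑ y, g y := by
  rw [← Equiv.sum_comp (Equiv.funSplitAt j K).symm (fun ω => g (ω j))]
  simp [Fintype.sum_prod_type, Finset.sum_const, Fintype.card_fun, Fintype.card_subtype_compl,
    Finset.sum_mul]
  rw [← Finset.mul_sum]

lemma marg2 {ι K : Type*} [Fintype ι] [Fintype K] [DecidableEq ι] {j k : ι} (hjk : k ≠ j)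
    (g h : K → ℝ) :
    ∑ ω : ι → K, g (ω j) * h (ω k)
      = (Fintype.card K : ℝ) ^ (Fintype.card ι - 2) * ((∑ y, g y) * (∑ y, h y)) := by
  rw [← Equiv.sum_comp (Equiv.funSplitAt j K).symm (fun ω => g (ω j) * h (ω k))]
  have : ∀ p : K × ({ i // i ≠ j } → K),
      g ((Equiv.funSplitAt j K).symm p j) * h ((Equiv.funSplitAt j K).symm p k)
        = g p.1 * h (p.2 ⟨k, hjk⟩) := by
    intro p
    simp [Equiv.funSplitAt, Equiv.piSplitAt_symm_apply, hjk]
  rw [Fintype.sum_congr _ _ this]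
  rw [Fintype.sum_prod_type]
  simp_rw [← Finset.mul_sum]
  rw [marg (⟨k, hjk⟩ : {i // i ≠ j}) h, ← Finset.sum_mul]
  have hcard : Fintype.card {i // i ≠ j} = Fintype.card ι - 1 := by
    simp [Fintype.card_subtype_compl]
  rw [hcard]
  have h2 : Fintype.card ι - 1 - 1 = Fintype.card ι - 2 := by omega
  rw [h2]; ring


lemma hcSum (d : ℕ) (x : Fin d → Bool) (u : ℝ) :
    ∑ y : Fin d → Bool, Real.exp (u * ∑ i, (if y i = x i then (1:ℝ) else -1))
      = (2 * Real.cosh u) ^ d := by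
  have key : ∀ y : Fin d → Bool, Real.exp (u * ∑ i, (if y i = x i then (1:ℝ) else -1))
      = ∏ i, Real.exp (u * (if y i = x i then (1:ℝ) else -1)) := by
    intro y; rw [Finset.mul_sum, Real.exp_sum]
  simp_rw [key]
  rw [← Fintype.piFinset_univ]
  rw [← Finset.prod_univ_sum (fun _ => (Finset.univ : Finset Bool))
    (fun i b => Real.exp (u * (if b = x i then (1:ℝ) else -1)))]
  have : ∀ i : Fin d, ∑ b : Bool, Real.exp (u * (if b = x i then (1:ℝ) else -1))
      = 2 * Real.cosh u := by
    intro i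
    rw [Real.cosh_eq]
    cases x i <;> simp [Fintype.sum_bool] <;> ring
  rw [Finset.prod_congr rfl (fun i _ => this i), Finset.prod_const, Finset.card_univ,
    Fintype.card_fin]

lemma pt (d : ℕ) (hd : 0 < d) (r : ℝ) (hr : 0 < r) (x y : Fin d → Bool) :
    2 * (∑ i, hcVec d r y i * hcVec d r x i) / Real.sqrt d
      = (2 * r ^ 2 / (d * Real.sqrt d)) * ∑ i, (if y i = x i then (1:ℝ) else -1) := by
  have hd0 : (0:ℝ) < d := by exact_mod_cast hd
  have hs : (0:ℝ) < Real.sqrt d := Real.sqrt_pos.2 hd0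
  have hterm : ∀ i, hcVec d r y i * hcVec d r x i
      = (r ^ 2 / d) * (if y i = x i then (1:ℝ) else -1) := by
    intro i
    have haa : r / Real.sqrt d * (r / Real.sqrt d) = r ^ 2 / d := by
      rw [div_mul_div_comm, Real.mul_self_sqrt hd0.le]; ring
    unfold hcVec
    cases hy : y i <;> cases hx : x i <;> simp [haa] <;> ring_nf <;> rw [← haa] <;> ring
  rw [Finset.sum_congr rfl (fun i _ => hterm i), ← Finset.mul_sum]
  field_simp


set_option maxHeartbeats 1000000 in
/-- Concentration of the squared norm of the softmax score vector over random keys: fix `x`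
in the hypercube `{−r/√d, r/√d}^d` (with `r² ≤ d`, `m ≥ 5·10^6`); for i.i.d. uniform
hypercube vectors `y₁, …, y_m`, the sum `S = ∑_j exp(2⟨y_j, x⟩/√d)` satisfies
`Pr[m/5 ≤ S ≤ 200 m] ≥ 0.999`. -/
theorem stmt_11 (d m : ℕ) (hd : 0 < d) (hm : 5 * 10 ^ 6 ≤ m)
    (r : ℝ) (hr : 0 < r) (hrd : r ^ 2 ≤ (d : ℝ)) (x : Fin d → Bool) :
    ENNReal.ofReal 0.999 ≤
      (PMF.uniformOfFintype (Fin m → (Fin d → Bool))).toOuterMeasure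
        {ω : Fin m → (Fin d → Bool) |
          (m : ℝ) / 5 ≤
              ∑ j : Fin m,
                Real.exp (2 * (∑ i : Fin d, hcVec d r (ω j) i * hcVec d r x i)
                  / Real.sqrt d)
          ∧ ∑ j : Fin m,
                Real.exp (2 * (∑ i : Fin d, hcVec d r (ω j) i * hcVec d r x i)
                  / Real.sqrt d)
              ≤ 200 * m} := by
  classical
  set t : ℝ := 2 * r ^ 2 / (d * Real.sqrt d) with ht
  set g : (Fin d → Bool) → ℝ := fun y => Real.exp (t * ∑ i, (if y i = x i then (1:ℝ) else -1))
    with hg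
  set μ : ℝ := Real.cosh t ^ d with hμ
  set β : ℝ := Real.cosh (2*t) ^ d with hβ
  set c : ℝ := ((2:ℝ)) ^ d with hc
  have hd0 : (0:ℝ) < d := by exact_mod_cast hd
  have hsq : Real.sqrt d ^ 2 = (d:ℝ) := Real.sq_sqrt hd0.le
  have hs0 : (0:ℝ) < Real.sqrt d := Real.sqrt_pos.2 hd0
  have ht2 : t ^ 2 = 4 * r ^ 4 / (d:ℝ) ^ 3 := by
    rw [ht, div_pow]
    rw [mul_pow (d:ℝ) (Real.sqrt d) 2, hsq]
    field_simp
    ring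
  have hr4 : r ^ 4 ≤ (d:ℝ) ^ 2 := by nlinarith [sq_nonneg r]
  have hexp8 : Real.exp 8 < 3025 := by
    have h1 : Real.exp 8 = Real.exp 1 ^ 8 := by
      rw [← Real.exp_nat_mul]; norm_num
    have h2 : Real.exp 1 ^ 8 ≤ 2.7182818286 ^ 8 :=
      pow_le_pow_left₀ (Real.exp_pos 1).le Real.exp_one_lt_d9.le 8
    have h3 : (2.7182818286:ℝ) ^ 8 < 3025 := by norm_num
    linarith
  have hμ1 : 1 ≤ μ := one_le_pow₀ (Real.one_le_cosh t)
  have hβ8 : β ≤ Real.exp 8 := by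
    have h1 : Real.cosh (2*t) ^ d ≤ Real.exp ((2*t)^2/2) ^ d :=
      pow_le_pow_left₀ (Real.cosh_pos (x := 2*t)).le (Real.cosh_le_exp_half_sq (2*t)) d
    have h2 : Real.exp ((2*t)^2/2) ^ d = Real.exp ((d:ℕ) * ((2*t)^2/2)) := by
      rw [Real.exp_nat_mul]
    have h3 : (d:ℝ) * ((2*t)^2/2) ≤ 8 := by
      have : (2*t)^2/2 = 2 * t^2 := by ring
      rw [this, ht2]
      have heq : (d:ℝ) * (2 * (4 * r ^ 4 / (d:ℝ) ^ 3)) = 8 * r ^ 4 / (d:ℝ) ^ 2 := by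
        field_simp; ring
      rw [heq, div_le_iff₀ (by positivity : (0:ℝ) < (d:ℝ)^2)]
      linarith [hr4]
    calc β ≤ Real.exp ((d:ℕ) * ((2*t)^2/2)) := by rw [← h2]; exact h1
      _ ≤ Real.exp 8 := Real.exp_le_exp.2 h3
  have hμβ : μ ^ 2 ≤ β := by
    have hcc : Real.cosh t ^ 2 ≤ Real.cosh (2*t) := by
      rw [Real.cosh_two_mul]
      nlinarith [Real.one_le_cosh t]
    calc μ ^ 2 = (Real.cosh t ^ 2) ^ d := by rw [hμ, ← pow_mul, ← pow_mul, Nat.mul_comm]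
      _ ≤ Real.cosh (2*t) ^ d := pow_le_pow_left₀ (sq_nonneg _) hcc d
      _ = β := rfl
  have hμ0 : (0:ℝ) ≤ μ := by linarith
  have hμ55 : μ ≤ 55 := by nlinarith [hμβ, hβ8, hexp8, hμ0]
  -- moments
  set A : ℝ := ∑ y : Fin d → Bool, g y with hA'
  set B : ℝ := ∑ y : Fin d → Bool, g y * g y with hB'
  have hA : A = c * μ := by
    rw [hA', hg]
    rw [hcSum d x t, hc, hμ, mul_pow]
  have hB : B = c * β := by
    have hgg : ∀ y : Fin d → Bool, g y * g y
        = Real.exp ((2*t) * ∑ i, (if y i = x i then (1:ℝ) else -1)) := by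
      intro y
      rw [hg]
      dsimp only
      rw [← Real.exp_add]
      congr 1
      ring
    rw [hB']
    rw [Finset.sum_congr rfl (fun y _ => hgg y), hcSum d x (2*t), hc, hβ, mul_pow]
  have hcK : ((Fintype.card (Fin d → Bool)) : ℝ) = c := by
    simp [hc, Fintype.card_fun]
  have hcardFin : Fintype.card (Fin m) = m := Fintype.card_fin m
  set f : (Fin m → (Fin d → Bool)) → ℝ := fun ω => ∑ j, g (ω j) with hf
  have hSum1 : ∑ ω : Fin m → (Fin d → Bool), f ω = (m:ℝ) * (c^(m-1) * A) := by
    rw [hf]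
    rw [Finset.sum_comm]
    have : ∀ j : Fin m, ∑ ω : Fin m → (Fin d → Bool), g (ω j) = c^(m-1) * A := by
      intro j
      rw [marg j g, hcK, hcardFin, hA']
    rw [Finset.sum_congr rfl (fun j _ => this j), Finset.sum_const, Finset.card_univ,
      hcardFin, nsmul_eq_mul]
  have hpair : ∀ j k : Fin m, ∑ ω : Fin m → (Fin d → Bool), g (ω j) * g (ω k)
      = if k = j then c^(m-1) * B else c^(m-2) * (A * A) := by
    intro j k
    by_cases h : k = j
    · subst h
      rw [if_pos rfl, marg k (fun y => g y * g y), hcK, hcardFin, hB']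
    · rw [if_neg h, marg2 h g g, hcK, hcardFin, hA']
  have hrow : ∀ (X Y : ℝ) (j : Fin m), ∑ k : Fin m, (if k = j then X else Y)
      = X + ((m:ℝ) - 1) * Y := by
    intro X Y j
    have hsplit : ∀ k : Fin m, (if k = j then X else Y) = Y + (if k = j then X - Y else 0) := by
      intro k; by_cases h : k = j <;> simp [h]
    simp_rw [hsplit]
    rw [Finset.sum_add_distrib, Finset.sum_const, Finset.card_univ, hcardFin,
      Finset.sum_ite_eq' Finset.univ j (fun _ => X - Y), if_pos (Finset.mem_univ j),
      nsmul_eq_mul]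
    ring
  have hm' : (5000000:ℝ) ≤ (m:ℝ) := by exact_mod_cast (by norm_num at hm ⊢; exact hm : (5000000:ℕ) ≤ m)
  have hm0 : (0:ℝ) < m := by linarith
  have hSum2 : ∑ ω : Fin m → (Fin d → Bool), f ω * f ω
      = (m:ℝ) * (c^(m-1) * B + ((m:ℝ) - 1) * (c^(m-2) * (A * A))) := by
    have hsq' : ∀ ω : Fin m → (Fin d → Bool),
        f ω * f ω = ∑ j : Fin m, ∑ k : Fin m, g (ω j) * g (ω k) := by
      intro ω
      rw [hf]
      exact Finset.sum_mul_sum Finset.univ Finset.univ _ _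
    rw [Finset.sum_congr rfl (fun ω _ => hsq' ω)]
    rw [Finset.sum_comm]
    have hinner : ∀ j : Fin m,
        ∑ ω : Fin m → (Fin d → Bool), ∑ k : Fin m, g (ω j) * g (ω k)
          = c^(m-1) * B + ((m:ℝ) - 1) * (c^(m-2) * (A * A)) := by
      intro j
      rw [Finset.sum_comm]
      have : ∀ k : Fin m, ∑ ω : Fin m → (Fin d → Bool), g (ω j) * g (ω k)
          = if k = j then c^(m-1) * B else c^(m-2) * (A * A) := hpair j
      rw [Finset.sum_congr rfl (fun k _ => this k), hrow]
    rw [Finset.sum_congr rfl (fun j _ => hinner j), Finset.sum_const, Finset.card_univ,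
      hcardFin, nsmul_eq_mul]
  have hcardΩ : ((Fintype.card (Fin m → (Fin d → Bool))) : ℝ) = c ^ m := by
    rw [Fintype.card_fun, hcardFin]
    push_cast
    rw [hcK]
  have hc0 : (0:ℝ) < c := by rw [hc]; positivity
  have e1 : c^(m-1) = c^(m-2) * c := by
    rw [← pow_succ]
    congr 1
    omega
  have e2 : c^m = c^(m-2) * c * c := by
    rw [← pow_succ, ← pow_succ]
    congr 1
    omega
  have hexpand : ∑ ω : Fin m → (Fin d → Bool), (f ω - (m:ℝ)*μ)^2
      = (∑ ω : Fin m → (Fin d → Bool), f ω * f ω)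
        - 2*((m:ℝ)*μ)*(∑ ω : Fin m → (Fin d → Bool), f ω)
        + ((Fintype.card (Fin m → (Fin d → Bool))) : ℝ) * ((m:ℝ)*μ)^2 := by
    have hpt : ∀ ω : Fin m → (Fin d → Bool),
        (f ω - (m:ℝ)*μ)^2 = f ω * f ω - 2*((m:ℝ)*μ)*(f ω) + ((m:ℝ)*μ)^2 := by
      intro ω; ring
    rw [Finset.sum_congr rfl (fun ω _ => hpt ω)]
    rw [Finset.sum_add_distrib, Finset.sum_sub_distrib, ← Finset.mul_sum, Finset.sum_const,
      Finset.card_univ, nsmul_eq_mul]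
  have hvarEq : ∑ ω : Fin m → (Fin d → Bool), (f ω - (m:ℝ)*μ)^2
      = (m:ℝ) * (c^(m-2) * c) * B - (m:ℝ) * (c^(m-2) * c * c) * μ^2 := by
    rw [hexpand, hSum1, hSum2, hcardΩ, hA, e1, e2]
    ring
  have hvar : ∑ ω : Fin m → (Fin d → Bool), (f ω - (m:ℝ)*μ)^2
      ≤ (m:ℝ) * c^m * Real.exp 8 := by
    rw [hvarEq, e2]
    have h1 : B ≤ c * Real.exp 8 := by
      rw [hB]
      exact mul_le_mul_of_nonneg_left hβ8 hc0.le
    have hq : (0:ℝ) ≤ (m:ℝ) * (c^(m-2) * c) :=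
      mul_nonneg hm0.le (mul_nonneg (pow_nonneg hc0.le _) hc0.le)
    have h2 := mul_le_mul_of_nonneg_left h1 hq
    have h3 : (0:ℝ) ≤ (m:ℝ) * (c^(m-2) * c * c) * μ^2 :=
      mul_nonneg (mul_nonneg hm0.le
        (mul_nonneg (mul_nonneg (pow_nonneg hc0.le _) hc0.le) hc0.le)) (sq_nonneg μ)
    linarith only [h2, h3]
  -- Chebyshev
  set P : (Fin m → (Fin d → Bool)) → Prop := fun ω => (m:ℝ)/5 ≤ f ω ∧ f ω ≤ 200*(m:ℝ) with hP
  set Bad : Finset (Fin m → (Fin d → Bool)) := Finset.univ.filter (fun ω => ¬ P ω) with hBad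
  have hBadpt : ∀ ω ∈ Bad, (0.8*(m:ℝ))^2 ≤ (f ω - (m:ℝ)*μ)^2 := by
    intro ω hω
    rw [hBad, Finset.mem_filter, hP] at hω
    rcases not_and_or.mp hω.2 with h | h
    · push_neg at h
      have hmm : (m:ℝ) * 1 ≤ (m:ℝ) * μ := mul_le_mul_of_nonneg_left hμ1 hm0.le
      have h2 : 0.8*(m:ℝ) ≤ (m:ℝ)*μ - f ω := by linarith only [h, hmm, hm0]
      have h3 : (0.8*(m:ℝ))^2 ≤ ((m:ℝ)*μ - f ω)^2 :=
        pow_le_pow_left₀ (by positivity) h2 2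
      have hr2 : ((m:ℝ)*μ - f ω)^2 = (f ω - (m:ℝ)*μ)^2 := by ring
      linarith only [h3, hr2]
    · push_neg at h
      have hmm : (m:ℝ) * μ ≤ (m:ℝ) * 55 := mul_le_mul_of_nonneg_left hμ55 hm0.le
      have h2 : 0.8*(m:ℝ) ≤ f ω - (m:ℝ)*μ := by linarith only [h, hmm, hm0]
      exact pow_le_pow_left₀ (by positivity) h2 2
  have hcheb : (Bad.card : ℝ) * (0.8*(m:ℝ))^2 ≤ (m:ℝ) * c^m * Real.exp 8 := by
    calc (Bad.card : ℝ) * (0.8*(m:ℝ))^2 = Bad.card • ((0.8*(m:ℝ))^2) := by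
          rw [nsmul_eq_mul]
      _ ≤ ∑ ω ∈ Bad, (f ω - (m:ℝ)*μ)^2 := Finset.card_nsmul_le_sum Bad _ _ hBadpt
      _ ≤ ∑ ω : Fin m → (Fin d → Bool), (f ω - (m:ℝ)*μ)^2 :=
          Finset.sum_le_sum_of_subset_of_nonneg (Finset.subset_univ Bad)
            (fun ω _ _ => sq_nonneg _)
      _ ≤ (m:ℝ) * c^m * Real.exp 8 := hvar
  have hN0 : (0:ℝ) < c ^ m := pow_pos hc0 m
  have hBadcard : (Bad.card : ℝ) ≤ 0.001 * c^m := by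
    have h32 : Real.exp 8 ≤ 3200 := by linarith
    have key : (Bad.card : ℝ) * (0.64*(m:ℝ)^2) ≤ 0.001 * c^m * (0.64*(m:ℝ)^2) := by
      have lhs_eq : (Bad.card : ℝ) * (0.64*(m:ℝ)^2) = (Bad.card : ℝ) * (0.8*(m:ℝ))^2 := by ring
      rw [lhs_eq]
      have step1 : (m:ℝ) * c^m * Real.exp 8 ≤ (m:ℝ) * c^m * 3200 :=
        mul_le_mul_of_nonneg_left h32 (by positivity)
      have hmc : (3200:ℝ) ≤ 0.00064 * (m:ℝ) := by linarith
      have step2 : (m:ℝ) * c^m * 3200 ≤ 0.001 * c^m * (0.64*(m:ℝ)^2) := by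
        calc (m:ℝ) * c^m * 3200 = 3200 * ((m:ℝ) * c^m) := by ring
          _ ≤ (0.00064 * (m:ℝ)) * ((m:ℝ) * c^m) :=
              mul_le_mul_of_nonneg_right hmc (mul_nonneg hm0.le hN0.le)
          _ = 0.001 * c^m * (0.64*(m:ℝ)^2) := by ring
      linarith [hcheb]
    exact le_of_mul_le_mul_right key (by positivity)
  -- identify the statement's sum with f
  have hfEq : ∀ ω : Fin m → (Fin d → Bool),
      (∑ j : Fin m, Real.exp (2 * (∑ i : Fin d, hcVec d r (ω j) i * hcVec d r x i)
        / Real.sqrt d)) = f ω := by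
    intro ω
    rw [hf]
    refine Finset.sum_congr rfl (fun j _ => ?_)
    rw [pt d hd r hr x (ω j), hg]
  have hsetEq : {ω : Fin m → (Fin d → Bool) |
        (m : ℝ) / 5 ≤ ∑ j : Fin m,
            Real.exp (2 * (∑ i : Fin d, hcVec d r (ω j) i * hcVec d r x i) / Real.sqrt d)
        ∧ (∑ j : Fin m,
            Real.exp (2 * (∑ i : Fin d, hcVec d r (ω j) i * hcVec d r x i) / Real.sqrt d))
          ≤ 200 * m}
      = {ω : Fin m → (Fin d → Bool) | P ω} := by
    ext ω
    simp only [Set.mem_setOf_eq, hfEq ω, hP]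
  rw [hsetEq]
  set Good : Finset (Fin m → (Fin d → Bool)) := Finset.univ.filter P with hGoodDef
  have hGB : Good.card + Bad.card = Fintype.card (Fin m → (Fin d → Bool)) := by
    rw [hGoodDef, hBad, Finset.card_filter_add_card_filter_not, Finset.card_univ]
  have hGood : 0.999 * ((Fintype.card (Fin m → (Fin d → Bool))) : ℝ) ≤ (Good.card : ℝ) := by
    have hcast : (Good.card : ℝ) + (Bad.card : ℝ)
        = ((Fintype.card (Fin m → (Fin d → Bool))) : ℝ) := by
      exact_mod_cast congrArg (fun n : ℕ => (n : ℝ)) hGB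
    rw [hcardΩ] at hcast ⊢
    linarith [hBadcard]
  have hmeasEq : (PMF.uniformOfFintype (Fin m → (Fin d → Bool))).toOuterMeasure
      {ω : Fin m → (Fin d → Bool) | P ω}
      = (Good.card : ℝ≥0∞) * ((Fintype.card (Fin m → (Fin d → Bool)) : ℝ≥0∞))⁻¹ := by
    rw [PMF.toOuterMeasure_apply_fintype]
    have hind : ∀ ω : Fin m → (Fin d → Bool),
        Set.indicator {ω : Fin m → (Fin d → Bool) | P ω}
          (PMF.uniformOfFintype (Fin m → (Fin d → Bool))) ω
        = if P ω then ((Fintype.card (Fin m → (Fin d → Bool)) : ℝ≥0∞))⁻¹ else 0 := by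
      intro ω
      rw [Set.indicator_apply]
      by_cases h : P ω <;> simp [h, PMF.uniformOfFintype_apply]
    rw [Finset.sum_congr rfl (fun ω _ => hind ω), Finset.sum_ite, Finset.sum_const,
      Finset.sum_const_zero, add_zero, nsmul_eq_mul]
  rw [hmeasEq]
  have hcΩpos : 0 < Fintype.card (Fin m → (Fin d → Bool)) := Fintype.card_pos
  have h0 : ((Fintype.card (Fin m → (Fin d → Bool)) : ℝ≥0∞)) ≠ 0 := by
    exact_mod_cast Nat.cast_ne_zero.2 hcΩpos.ne'
  have htop : ((Fintype.card (Fin m → (Fin d → Bool)) : ℝ≥0∞)) ≠ ⊤ :=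
    ENNReal.natCast_ne_top _
  rw [← div_eq_mul_inv, ENNReal.le_div_iff_mul_le (Or.inl h0) (Or.inl htop)]
  have hlhs : ENNReal.ofReal 0.999 * ((Fintype.card (Fin m → (Fin d → Bool)) : ℝ≥0∞))
      = ENNReal.ofReal (0.999 * ((Fintype.card (Fin m → (Fin d → Bool))) : ℝ)) := by
    rw [ENNReal.ofReal_mul (by norm_num), ENNReal.ofReal_natCast]
  rw [hlhs, show ((Good.card : ℝ≥0∞)) = ENNReal.ofReal ((Good.card : ℝ)) from
    (ENNReal.ofReal_natCast _).symm]
  exact ENNReal.ofReal_le_ofReal hGood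
end

section
/- There exists an absolute constant c > 0 such that for all positive integers n, d, s, all vectors k_1, …, k_n ∈ ℝ^d and v_1, …, v_n ∈ ℝ^s, and every fixed q ∈ ℝ^d, there exists a subset C' ⊆ {1,…,n} with |C'| ≤ n/2 such that ‖ ∑_{i ∈ C'} exp(⟨k_i, q⟩/√d) v_i − ∑_{i ∉ C'} exp(⟨k_i, q⟩/√d) v_i ‖₂ ≤ c · √s · log(2ns) · exp(‖q‖₂²/(2√d)) · max_{j ∈ [n]} exp(‖k_j‖₂²/(2√d)) · max_{j ∈ [n]} ‖v_j‖₂. -/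
open RealInnerProductSpace Finset

variable {E : Type*} [NormedAddCommGroup E] [InnerProductSpace ℝ E]


lemma greedy_aux {ι : Type*} [DecidableEq ι] (w : ι → E) (M : ℝ) (hM0 : 0 ≤ M)
    (hM : ∀ i, ‖w i‖ ≤ M) (F : Finset ι) :
    ∀ (lam : ι → ℝ), (∀ i ∈ F, |lam i| ≤ 1) →
      ∃ ε : ι → ℝ, (∀ i ∈ F, ε i = 1 ∨ ε i = -1) ∧
        ‖∑ i ∈ F, (ε i - lam i) • w i‖ ^ 2 ≤ 4 * F.card * M ^ 2 := by
  induction F using Finset.induction_on with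
  | empty => intro lam _; exact ⟨fun _ => 1, by simp, by simp⟩
  | @insert a F' ha ih =>
    intro lam hlam
    obtain ⟨ε', hε', hS⟩ := ih lam (fun i hi => hlam i (mem_insert_of_mem hi))
    set S := ∑ i ∈ F', (ε' i - lam i) • w i with hSdef
    set εa : ℝ := if 0 ≤ ⟪S, w a⟫ then -1 else 1 with hεa
    have hεa_pm : εa = 1 ∨ εa = -1 := by
      by_cases h : 0 ≤ ⟪S, w a⟫
      · right; simp [hεa, h]
      · left; simp [hεa, h]
    refine ⟨Function.update ε' a εa, ?_, ?_⟩
    · intro i hi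
      rcases Finset.mem_insert.mp hi with h | hi
      · subst h; rw [Function.update_self]; exact hεa_pm
      · rw [Function.update_of_ne (ne_of_mem_of_not_mem hi ha)]
        exact hε' i hi
    · rw [Finset.sum_insert ha]
      have hrest : ∑ i ∈ F', (Function.update ε' a εa i - lam i) • w i = S := by
        refine Finset.sum_congr rfl fun i hi => ?_
        rw [Function.update_of_ne (ne_of_mem_of_not_mem hi ha)]
      rw [hrest, Function.update_self]
      have hla : |lam a| ≤ 1 := hlam a (mem_insert_self a F')
      have hla' := abs_le.mp hla
      set δ : ℝ := εa - lam a with hδ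
      have hnorm : ‖δ • w a + S‖ ^ 2 = δ ^ 2 * ‖w a‖ ^ 2 + 2 * (δ * ⟪S, w a⟫) + ‖S‖ ^ 2 := by
        rw [norm_add_sq_real, norm_smul, real_inner_smul_left, real_inner_comm]
        rw [Real.norm_eq_abs, mul_pow, sq_abs]
      have hcross : δ * ⟪S, w a⟫ ≤ 0 := by
        by_cases h : 0 ≤ ⟪S, w a⟫
        · have : δ ≤ 0 := by rw [hδ, hεa, if_pos h]; linarith
          exact mul_nonpos_of_nonpos_of_nonneg this h
        · have : 0 ≤ δ := by rw [hδ, hεa, if_neg h]; linarith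
          exact mul_nonpos_of_nonneg_of_nonpos this (le_of_not_ge h)
      have hδ2 : δ ^ 2 ≤ 4 := by
        rcases hεa_pm with h | h <;> rw [hδ, h] <;> nlinarith
      have hwa : ‖w a‖ ^ 2 ≤ M ^ 2 := by nlinarith [hM a, norm_nonneg (w a)]
      have hcard : ((insert a F').card : ℝ) = F'.card + 1 := by
        rw [Finset.card_insert_of_notMem ha]; push_cast; ring
      rw [hnorm, hcard]
      nlinarith [sq_nonneg δ, norm_nonneg (w a), sq_nonneg ‖w a‖, sq_nonneg M]

lemma main_aux {n s : ℕ} (w : Fin n → EuclideanSpace ℝ (Fin s)) (M : ℝ) (hM0 : 0 ≤ M)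
    (hM : ∀ i, ‖w i‖ ≤ M) (F : Finset (Fin n)) :
    ∀ (lam : Fin n → ℝ), (∀ i ∈ F, |lam i| ≤ 1) →
      ∃ ε : Fin n → ℝ, (∀ i ∈ F, ε i = 1 ∨ ε i = -1) ∧
        ‖∑ i ∈ F, (ε i - lam i) • w i‖ ^ 2 ≤ 4 * s * M ^ 2 := by
  induction F using Finset.strongInduction with
  | _ F ih =>
    intro lam hlam
    by_cases hc : F.card ≤ s
    · obtain ⟨ε, hε, hb⟩ := greedy_aux w M hM0 hM F lam hlam
      refine ⟨ε, hε, hb.trans ?_⟩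
      have : (F.card : ℝ) ≤ s := by exact_mod_cast hc
      nlinarith [sq_nonneg M]
    · push_neg at hc
      -- linear dependence
      have hnli : ¬ LinearIndependent ℝ (fun i : ↥F => w i) := by
        intro h
        have := h.fintype_card_le_finrank
        rw [Fintype.card_coe, finrank_euclideanSpace_fin] at this
        omega
      obtain ⟨g, hg0, j0, hgj0⟩ := Fintype.not_linearIndependent_iff.mp hnli
      classical
      set μ : Fin n → ℝ := fun i => if h : i ∈ F then g ⟨i, h⟩ else 0 with hμ
      have hμsum : ∑ i ∈ F, μ i • w i = 0 := by
        rw [← Finset.sum_attach F (fun i => μ i • w i)]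
        rw [← hg0]
        refine Finset.sum_congr rfl fun i _ => ?_
        simp [hμ, i.2]
      set T : Finset (Fin n) := F.filter (fun i => μ i ≠ 0) with hT
      have hj0T : (j0 : Fin n) ∈ T := by
        rw [hT, Finset.mem_filter]
        refine ⟨j0.2, ?_⟩
        simpa [hμ, j0.2] using hgj0
      set gfun : Fin n → ℝ := fun i => if 0 < μ i then (1 - lam i) / μ i else (-1 - lam i) / μ i with hgfun
      obtain ⟨j, hjT, hjmin⟩ := T.exists_min_image gfun ⟨j0, hj0T⟩
      have hjF : j ∈ F := (Finset.mem_filter.mp hjT).1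
      have hμj : μ j ≠ 0 := (Finset.mem_filter.mp hjT).2
      set t : ℝ := gfun j with ht
      have hgnn : ∀ i ∈ T, 0 ≤ gfun i := by
        intro i hiT
        have hiF : i ∈ F := (Finset.mem_filter.mp hiT).1
        have hμi : μ i ≠ 0 := (Finset.mem_filter.mp hiT).2
        have hli := abs_le.mp (hlam i hiF)
        show (0:ℝ) ≤ if 0 < μ i then (1 - lam i) / μ i else (-1 - lam i) / μ i
        by_cases h : 0 < μ i
        · rw [if_pos h]; apply div_nonneg <;> linarith
        · rw [if_neg h]
          have : μ i < 0 := lt_of_le_of_ne (le_of_not_gt h) hμi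
          have hd := div_nonneg (by linarith : (0:ℝ) ≤ -(-1 - lam i)) (by linarith : (0:ℝ) ≤ -μ i)
          rwa [neg_div_neg_eq] at hd
      have ht0 : 0 ≤ t := hgnn j hjT
      set lam' : Fin n → ℝ := fun i => lam i + t * μ i with hlam'
      have hlam'le : ∀ i ∈ F, |lam' i| ≤ 1 := by
        intro i hiF
        have hli := abs_le.mp (hlam i hiF)
        have hlam'i : lam' i = lam i + t * μ i := rfl
        rw [abs_le, hlam'i]
        by_cases hμi : μ i = 0
        · simp [hμi]; constructor <;> linarith
        · have hiT : i ∈ T := Finset.mem_filter.mpr ⟨hiF, hμi⟩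
          have htle : t ≤ gfun i := hjmin i hiT
          by_cases h : 0 < μ i
          · have hgi : gfun i = (1 - lam i) / μ i := by
              simp only [hgfun]; rw [if_pos h]
            have h1 : t * μ i ≤ 1 - lam i := by
              have hle : t * μ i ≤ gfun i * μ i := by nlinarith
              rw [hgi, div_mul_cancel₀ _ hμi] at hle
              exact hle
            have h2 : 0 ≤ t * μ i := by positivity
            constructor <;> linarith
          · have hneg : μ i < 0 := lt_of_le_of_ne (le_of_not_gt h) hμi
            have hgi : gfun i = (-1 - lam i) / μ i := by
              simp only [hgfun]; rw [if_neg h]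
            have h1 : -1 - lam i ≤ t * μ i := by
              have hle : gfun i * μ i ≤ t * μ i := by nlinarith
              rw [hgi, div_mul_cancel₀ _ hμi] at hle
              exact hle
            have h2 : t * μ i ≤ 0 := mul_nonpos_of_nonneg_of_nonpos ht0 (le_of_lt hneg)
            constructor <;> linarith
      have hlam'j : lam' j = 1 ∨ lam' j = -1 := by
        have hlj : lam' j = lam j + gfun j * μ j := rfl
        rw [hlj]
        by_cases h : 0 < μ j
        · left
          have hgj : gfun j = (1 - lam j) / μ j := by simp only [hgfun]; rw [if_pos h]
          rw [hgj, div_mul_cancel₀ _ hμj]; ring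
        · right
          have hgj : gfun j = (-1 - lam j) / μ j := by simp only [hgfun]; rw [if_neg h]
          rw [hgj, div_mul_cancel₀ _ hμj]; ring
      obtain ⟨ε', hε', hb⟩ := ih (F.erase j) (Finset.erase_ssubset hjF) lam'
        (fun i hi => hlam'le i (Finset.mem_of_mem_erase hi))
      refine ⟨Function.update ε' j (lam' j), ?_, ?_⟩
      · intro i hiF
        by_cases h : i = j
        · subst h; rw [Function.update_self]; exact hlam'j
        · rw [Function.update_of_ne h]
          exact hε' i (Finset.mem_erase.mpr ⟨h, hiF⟩)
      · have key : ∑ i ∈ F, (Function.update ε' j (lam' j) i - lam i) • w i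
            = ∑ i ∈ F.erase j, (ε' i - lam' i) • w i := by
          have split : ∀ i, (Function.update ε' j (lam' j) i - lam i) • w i
              = (Function.update ε' j (lam' j) i - lam' i) • w i + (t * μ i) • w i := by
            intro i
            rw [← add_smul, hlam']
            ring_nf
          rw [Finset.sum_congr rfl (fun i _ => split i), Finset.sum_add_distrib]
          have h2 : ∑ i ∈ F, (t * μ i) • w i = 0 := by
            have : ∀ i, (t * μ i) • w i = t • (μ i • w i) := fun i => by rw [mul_smul]
            rw [Finset.sum_congr rfl (fun i _ => this i), ← Finset.smul_sum, hμsum, smul_zero]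
          rw [h2, add_zero]
          conv_lhs => rw [← Finset.insert_erase hjF]
          rw [Finset.sum_insert (Finset.notMem_erase j F)]
          rw [Function.update_self]
          simp only [sub_self, zero_smul, zero_add]
          refine Finset.sum_congr rfl fun i hi => ?_
          rw [Function.update_of_ne (Finset.mem_erase.mp hi).1]
        rw [key]
        exact hb

/-- Deterministic consequence of the SoftmaxBalance guarantee (Theorem 3.3 with `δ = 1/2`):
there is an absolute constant `c > 0` such that for any keys `k_i ∈ ℝ^d`, values `v_i ∈ ℝ^s`
and any fixed query `q ∈ ℝ^d`, some subset `C' ⊆ [n]` with `|C'| ≤ n/2` balances the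
softmax-weighted value sums up to the stated error. -/
theorem stmt_14 :
    ∃ c : ℝ, 0 < c ∧
      ∀ (n d s : ℕ), 0 < n → 0 < d → 0 < s →
        ∀ (k : Fin n → EuclideanSpace ℝ (Fin d)) (v : Fin n → EuclideanSpace ℝ (Fin s)),
          ∀ q : EuclideanSpace ℝ (Fin d),
            ∃ C' : Finset (Fin n), (C'.card : ℝ) ≤ n / 2 ∧
              ‖(∑ i ∈ C', Real.exp (⟪k i, q⟫ / Real.sqrt d) • v i)
                - ∑ i ∈ C'ᶜ, Real.exp (⟪k i, q⟫ / Real.sqrt d) • v i‖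
              ≤ c * Real.sqrt s * Real.log (2 * n * s)
                  * Real.exp (‖q‖ ^ 2 / (2 * Real.sqrt d))
                  * (⨆ j : Fin n, Real.exp (‖k j‖ ^ 2 / (2 * Real.sqrt d)))
                  * (⨆ j : Fin n, ‖v j‖) := by
  refine ⟨3, by norm_num, ?_⟩
  intro n d s hn hd hs k v q
  set w : Fin n → EuclideanSpace ℝ (Fin s) :=
    fun i => Real.exp (⟪k i, q⟫ / Real.sqrt d) • v i with hw
  set S1 : ℝ := ⨆ j : Fin n, Real.exp (‖k j‖ ^ 2 / (2 * Real.sqrt d)) with hS1def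
  set S2 : ℝ := ⨆ j : Fin n, ‖v j‖ with hS2def
  set M : ℝ := Real.exp (‖q‖ ^ 2 / (2 * Real.sqrt d)) * S1 * S2 with hMdef
  have hsd : 0 < Real.sqrt d := Real.sqrt_pos.mpr (by exact_mod_cast hd)
  have i0 : Fin n := ⟨0, hn⟩
  have hS1 : ∀ i, Real.exp (‖k i‖ ^ 2 / (2 * Real.sqrt d)) ≤ S1 := fun i =>
    le_ciSup (f := fun j : Fin n => Real.exp (‖k j‖ ^ 2 / (2 * Real.sqrt d)))
      (Set.Finite.bddAbove (Set.finite_range _)) i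
  have hS2 : ∀ i, ‖v i‖ ≤ S2 := fun i =>
    le_ciSup (f := fun j : Fin n => ‖v j‖)
      (Set.Finite.bddAbove (Set.finite_range _)) i
  have hS1pos : 0 < S1 := lt_of_lt_of_le (Real.exp_pos _) (hS1 i0)
  have hS2nn : 0 ≤ S2 := le_trans (norm_nonneg _) (hS2 i0)
  have hM : ∀ i, ‖w i‖ ≤ M := by
    intro i
    have h1 := real_inner_le_norm (k i) q
    have key : ⟪k i, q⟫ / Real.sqrt d
        ≤ ‖k i‖ ^ 2 / (2 * Real.sqrt d) + ‖q‖ ^ 2 / (2 * Real.sqrt d) := by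
      have h4 : 0 ≤ (‖k i‖ ^ 2 + ‖q‖ ^ 2 - 2 * ⟪k i, q⟫) / (2 * Real.sqrt d) :=
        div_nonneg (by nlinarith [sq_nonneg (‖k i‖ - ‖q‖)]) (by positivity)
      have h5 : ‖k i‖ ^ 2 / (2 * Real.sqrt d) + ‖q‖ ^ 2 / (2 * Real.sqrt d)
          - ⟪k i, q⟫ / Real.sqrt d
          = (‖k i‖ ^ 2 + ‖q‖ ^ 2 - 2 * ⟪k i, q⟫) / (2 * Real.sqrt d) := by
        field_simp
      linarith
    have hnormw : ‖w i‖ = Real.exp (⟪k i, q⟫ / Real.sqrt d) * ‖v i‖ := by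
      rw [hw]
      simp only [norm_smul, Real.norm_eq_abs, abs_of_pos (Real.exp_pos _)]
    rw [hnormw, hMdef]
    calc Real.exp (⟪k i, q⟫ / Real.sqrt d) * ‖v i‖
        ≤ Real.exp (‖k i‖ ^ 2 / (2 * Real.sqrt d) + ‖q‖ ^ 2 / (2 * Real.sqrt d)) * ‖v i‖ :=
          mul_le_mul_of_nonneg_right (Real.exp_le_exp.mpr key) (norm_nonneg _)
      _ = Real.exp (‖q‖ ^ 2 / (2 * Real.sqrt d))
            * (Real.exp (‖k i‖ ^ 2 / (2 * Real.sqrt d)) * ‖v i‖) := by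
          rw [Real.exp_add]; ring
      _ ≤ Real.exp (‖q‖ ^ 2 / (2 * Real.sqrt d)) * (S1 * S2) :=
          mul_le_mul_of_nonneg_left
            (mul_le_mul (hS1 i) (hS2 i) (norm_nonneg _) hS1pos.le) (Real.exp_pos _).le
      _ = Real.exp (‖q‖ ^ 2 / (2 * Real.sqrt d)) * S1 * S2 := by ring
  have hM0 : 0 ≤ M := le_trans (norm_nonneg (w i0)) (hM i0)
  obtain ⟨ε, hε, hb⟩ := main_aux w M hM0 hM Finset.univ 0 (by simp)
  have hb' : ‖∑ i ∈ Finset.univ, ε i • w i‖ ^ 2 ≤ 4 * s * M ^ 2 := by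
    simpa using hb
  set S : EuclideanSpace ℝ (Fin s) := ∑ i ∈ Finset.univ, ε i • w i with hSdef
  set A : Finset (Fin n) := Finset.univ.filter (fun i => ε i = -1) with hA
  have hsplit : ∑ i ∈ Aᶜ, w i - ∑ i ∈ A, w i = S := by
    have h1 : S = ∑ i ∈ A, ε i • w i + ∑ i ∈ Aᶜ, ε i • w i := by
      rw [hSdef, ← Finset.sum_add_sum_compl A]
    have h2 : ∑ i ∈ A, ε i • w i = -∑ i ∈ A, w i := by
      rw [← Finset.sum_neg_distrib]
      refine Finset.sum_congr rfl fun i hi => ?_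
      have : ε i = -1 := (Finset.mem_filter.mp hi).2
      rw [this]; simp
    have h3 : ∑ i ∈ Aᶜ, ε i • w i = ∑ i ∈ Aᶜ, w i := by
      refine Finset.sum_congr rfl fun i hi => ?_
      have hi' : ε i ≠ -1 := by
        intro h
        exact (Finset.mem_compl.mp hi) (Finset.mem_filter.mpr ⟨Finset.mem_univ i, h⟩)
      have : ε i = 1 := (hε i (Finset.mem_univ i)).resolve_right hi'
      rw [this]; simp
    rw [h1, h2, h3]; abel
  have hcards : (A.card : ℝ) + (Aᶜ.card : ℝ) = n := by
    have h := Finset.card_add_card_compl A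
    rw [Fintype.card_fin] at h
    exact_mod_cast h
  have hnormS : ‖S‖ ≤ 2 * Real.sqrt s * M := by
    have hsq : Real.sqrt s ^ 2 = s := Real.sq_sqrt (Nat.cast_nonneg s)
    nlinarith [hb', norm_nonneg S, Real.sqrt_nonneg s, hM0,
      mul_nonneg (Real.sqrt_nonneg s) hM0]
  have hlog : (2:ℝ) ≤ 3 * Real.log (2 * n * s) := by
    have h2n : (2:ℝ) ≤ 2 * n * s := by
      have h1 : (1:ℝ) ≤ n := by exact_mod_cast hn
      have h2 : (1:ℝ) ≤ s := by exact_mod_cast hs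
      nlinarith
    have := Real.log_le_log (by norm_num) h2n
    have h3 := Real.log_two_gt_d9
    linarith
  have hfin : ‖S‖ ≤ 3 * Real.log (2 * n * s) * (Real.sqrt s * M) := by
    have hnn : 0 ≤ Real.sqrt s * M := mul_nonneg (Real.sqrt_nonneg s) hM0
    refine le_trans hnormS ?_
    calc 2 * Real.sqrt s * M = 2 * (Real.sqrt s * M) := by ring
      _ ≤ 3 * Real.log (2 * n * s) * (Real.sqrt s * M) :=
          mul_le_mul_of_nonneg_right hlog hnn
  -- choose the smaller side
  by_cases hAc : (A.card : ℝ) ≤ n / 2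
  · refine ⟨A, hAc, ?_⟩
    have hexpr : (∑ i ∈ A, w i) - ∑ i ∈ Aᶜ, w i = -S := by
      rw [← hsplit]; abel
    calc ‖(∑ i ∈ A, w i) - ∑ i ∈ Aᶜ, w i‖ = ‖S‖ := by rw [hexpr, norm_neg]
      _ ≤ 3 * Real.log (2 * n * s) * (Real.sqrt s * M) := hfin
      _ = 3 * Real.sqrt s * Real.log (2 * n * s)
            * Real.exp (‖q‖ ^ 2 / (2 * Real.sqrt d)) * S1 * S2 := by rw [hMdef]; ring
  · refine ⟨Aᶜ, by push_neg at hAc; linarith, ?_⟩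
    rw [compl_compl]
    calc ‖(∑ i ∈ Aᶜ, w i) - ∑ i ∈ A, w i‖ = ‖S‖ := by rw [hsplit]
      _ ≤ 3 * Real.log (2 * n * s) * (Real.sqrt s * M) := hfin
      _ = 3 * Real.sqrt s * Real.log (2 * n * s)
            * Real.exp (‖q‖ ^ 2 / (2 * Real.sqrt d)) * S1 * S2 := by rw [hMdef]; ring
end
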